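/- arXiv:2403.02964 — 6 statements merged into one kernel-verified Lean document; each statement's English description precedes it below -/
import Mathlib

section
/- Let γ ∈ (0,1], t₁ > 0, M ≥ 0, and let x, y : [0, t₁] → ℝ be continuously differentiable with x(0) = y(0) = 0, |x'(t) − 1| ≤ M t^γ and |y'(t)| ≤ M t^γ for all t ∈ [0, t₁]. Define r(t) := √(x(t)² + y(t)²). Then there exist t₂ ∈ (0, t₁] and M' ≥ 0 such that r is differentiable on (0, t₂] with |r'(t) − 1| ≤ M' t^γ for all t ∈ (0, t₂]; in particular r is strictly increasing on [0, t₂]. -/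
/-!
Write `ε(t) = M t^γ`. The mean value inequality gives `|x t - t| ≤ ε(t) t` and `|y t| ≤ ε(t) t`,
so near `0` the point `(x t, y t)` lies in a thin cone around the positive axis, `r t` is comparable
to `t`, and `r' = (x x' + y y') / r` differs from `1` by at most a constant times `ε(t)`.
Once `ε ≤ 1/20` the constant can be taken to be `3`, and then `r' > 0`.
-/

open Set Filter Topology

theorem sqrt_sq_add_sq_sub_mul_le (a b : ℝ) : (√(a ^ 2 + b ^ 2) - a) * a ≤ b ^ 2 := by
  have hρ := Real.sq_sqrt (add_nonneg (sq_nonneg a) (sq_nonneg b))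
  have ha : |a| ≤ √(a ^ 2 + b ^ 2) := Real.abs_le_sqrt (le_add_of_nonneg_right (sq_nonneg b))
  nlinarith [abs_le.1 ha, Real.sqrt_nonneg (a ^ 2 + b ^ 2)]

theorem abs_sub_mul_le_of_abs_deriv_sub_le {f f' : ℝ → ℝ} {a b c C : ℝ}
    (hf : ∀ s ∈ Icc a b, HasDerivWithinAt f (f' s) (Icc a b) s)
    (hf' : ∀ s ∈ Icc a b, |f' s - c| ≤ C) (hab : a ≤ b) :
    |f b - f a - c * (b - a)| ≤ C * (b - a) := by
  have hg : ∀ s ∈ Icc a b, HasDerivWithinAt (fun s => f s - c * s) (f' s - c) (Icc a b) s :=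
    fun s hs =>
      ((hf s hs).sub ((hasDerivWithinAt_id s _).const_mul c)).congr_deriv (by rw [mul_one])
  have hmvt := norm_image_sub_le_of_norm_deriv_le_segment' hg
    (fun s hs => hf' s (Ico_subset_Icc_self hs)) b (right_mem_Icc.2 hab)
  rw [Real.norm_eq_abs] at hmvt
  convert hmvt using 2
  ring

theorem abs_sub_mul_le_mul_rpow_of_abs_deriv_sub_le {f f' : ℝ → ℝ} {T c M γ t : ℝ}
    (hM : 0 ≤ M) (hγ : 0 ≤ γ)
    (hf : ∀ s ∈ Icc 0 T, HasDerivWithinAt f (f' s) (Icc 0 T) s)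
    (hf' : ∀ s ∈ Icc 0 T, |f' s - c| ≤ M * s ^ γ) (ht : t ∈ Icc 0 T) :
    |f t - f 0 - c * t| ≤ M * t ^ γ * t := by
  have hsub : Icc 0 t ⊆ Icc 0 T := Icc_subset_Icc_right ht.2
  simpa using abs_sub_mul_le_of_abs_deriv_sub_le (fun s hs => (hf s (hsub hs)).mono hsub)
    (fun s hs => (hf' s (hsub hs)).trans
      (mul_le_mul_of_nonneg_left (Real.rpow_le_rpow hs.1 hs.2 hγ) hM)) ht.1

theorem HasDerivAt.sqrt_sq_add_sq {x y : ℝ → ℝ} {x' y' t : ℝ} (hx : HasDerivAt x x' t)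
    (hy : HasDerivAt y y' t) (h : x t ^ 2 + y t ^ 2 ≠ 0) :
    HasDerivAt (fun s => √(x s ^ 2 + y s ^ 2))
      ((x t * x' + y t * y') / √(x t ^ 2 + y t ^ 2)) t := by
  convert ((hx.fun_pow 2).fun_add (hy.fun_pow 2)).sqrt h using 1
  field_simp
  ring

theorem exists_lt_mul_rpow_le {γ : ℝ} (hγ : 0 < γ) (M : ℝ) {T δ : ℝ} (hT : 0 < T) (hδ : 0 < δ) :
    ∃ t, 0 < t ∧ t < T ∧ M * t ^ γ ≤ δ := by
  have hlim : Tendsto (fun t : ℝ => M * t ^ γ) (𝓝[>] 0) (𝓝 0) := by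
    simpa [Real.zero_rpow hγ.ne'] using
      ((Real.continuousAt_rpow_const 0 γ (Or.inr hγ.le)).tendsto.const_mul M).mono_left
        nhdsWithin_le_nhds
  obtain ⟨t, hle, ht⟩ := ((hlim.eventually (ge_mem_nhds hδ)).and (Ioo_mem_nhdsGT hT)).exists
  exact ⟨t, ht.1, ht.2, hle⟩

theorem pos_of_abs_sub_le_mul {a t ε : ℝ} (ht : 0 < t) (hε : ε < 1) (ha : |a - t| ≤ ε * t) :
    0 < a := by
  nlinarith [abs_le.1 ha]

theorem abs_div_sqrt_sub_one_le {a b a' b' t ε : ℝ} (ht : 0 < t) (hε0 : 0 ≤ ε) (hε : ε ≤ 1 / 20)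
    (ha : |a - t| ≤ ε * t) (hb : |b| ≤ ε * t) (ha' : |a' - 1| ≤ ε) (hb' : |b'| ≤ ε) :
    |(a * a' + b * b') / √(a ^ 2 + b ^ 2) - 1| ≤ 3 * ε := by
  set ρ := √(a ^ 2 + b ^ 2)
  have ha0 := pos_of_abs_sub_le_mul ht (by linarith) ha
  have hρa : a ≤ ρ := Real.le_sqrt_of_sq_le (le_add_of_nonneg_right (sq_nonneg b))
  have hρ0 : 0 < ρ := ha0.trans_le hρa
  have hat : 19 / 20 * t ≤ a := by nlinarith [abs_le.1 ha]
  have hb2 : b ^ 2 ≤ (ε * t) ^ 2 := sq_le_sq' (abs_le.1 hb).1 (abs_le.1 hb).2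
  have hρa_le : ρ - a ≤ ε * t := by
    have hεt : (ε * t) ^ 2 ≤ ε * t * a := by
      rw [sq]; exact mul_le_mul_of_nonneg_left (by nlinarith) (by positivity)
    exact le_of_mul_le_mul_right ((sqrt_sq_add_sq_sub_mul_le a b).trans (hb2.trans hεt)) ha0
  have haa' : |a * (a' - 1)| ≤ ε * a := by
    rw [abs_mul, abs_of_pos ha0, mul_comm]; exact mul_le_mul_of_nonneg_right ha' ha0.le
  have hbb' : |b * b'| ≤ ε * t * ε := by
    rw [abs_mul]; exact mul_le_mul hb hb' (abs_nonneg _) (by positivity)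
  have hnum : |a * a' + b * b' - ρ| ≤ 3 * ε * ρ := by
    rw [abs_le]; constructor <;> nlinarith [abs_le.1 haa', abs_le.1 hbb']
  rw [div_sub_one hρ0.ne', abs_div, abs_of_pos hρ0, div_le_iff₀ hρ0]
  exact hnum

theorem exists_hasDerivAt_sqrt_sq_add_sq_abs_sub_one_le {x y x' y' : ℝ → ℝ} {T M γ t : ℝ}
    (hM : 0 ≤ M) (hγ : 0 ≤ γ)
    (hxd : ∀ s ∈ Icc 0 T, HasDerivWithinAt x (x' s) (Icc 0 T) s)
    (hyd : ∀ s ∈ Icc 0 T, HasDerivWithinAt y (y' s) (Icc 0 T) s)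
    (hx0 : x 0 = 0) (hy0 : y 0 = 0)
    (hx' : ∀ s ∈ Icc 0 T, |x' s - 1| ≤ M * s ^ γ) (hy' : ∀ s ∈ Icc 0 T, |y' s| ≤ M * s ^ γ)
    (ht : t ∈ Ioo 0 T) (hε : M * t ^ γ ≤ 1 / 20) :
    ∃ d, HasDerivAt (fun s => √(x s ^ 2 + y s ^ 2)) d t ∧ |d - 1| ≤ 3 * M * t ^ γ := by
  have htT : t ∈ Icc 0 T := Ioo_subset_Icc_self ht
  have hnhds : Icc 0 T ∈ 𝓝 t := Icc_mem_nhds ht.1 ht.2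
  have hxt := abs_sub_mul_le_mul_rpow_of_abs_deriv_sub_le hM hγ hxd hx' htT
  have hyt := abs_sub_mul_le_mul_rpow_of_abs_deriv_sub_le (c := 0) hM hγ hyd
    (by simpa using hy') htT
  rw [hx0, sub_zero, one_mul] at hxt
  rw [hy0, zero_mul, sub_zero, sub_zero] at hyt
  have hxpos := pos_of_abs_sub_le_mul ht.1 (by linarith) hxt
  refine ⟨_, ((hxd t htT).hasDerivAt hnhds).sqrt_sq_add_sq ((hyd t htT).hasDerivAt hnhds)
    (by positivity), ?_⟩
  rw [mul_assoc]
  exact abs_div_sqrt_sub_one_le ht.1 (mul_nonneg hM (Real.rpow_nonneg ht.1.le γ)) hε hxt hyt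
    (hx' t htT) (hy' t htT)

theorem stmt_1_general (γ t₁ M : ℝ) (hγ0 : 0 < γ) (ht₁ : 0 < t₁) (hM : 0 ≤ M)
    (x y x' y' : ℝ → ℝ)
    (hxd : ∀ t ∈ Icc (0:ℝ) t₁, HasDerivWithinAt x (x' t) (Icc 0 t₁) t)
    (hyd : ∀ t ∈ Icc (0:ℝ) t₁, HasDerivWithinAt y (y' t) (Icc 0 t₁) t)
    (hx0 : x 0 = 0) (hy0 : y 0 = 0)
    (hx' : ∀ t ∈ Icc (0:ℝ) t₁, |x' t - 1| ≤ M * t ^ γ)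
    (hy' : ∀ t ∈ Icc (0:ℝ) t₁, |y' t| ≤ M * t ^ γ)
    (r : ℝ → ℝ) (hr : ∀ t, r t = Real.sqrt ((x t) ^ 2 + (y t) ^ 2)) :
    ∃ t₂, 0 < t₂ ∧ t₂ ≤ t₁ ∧ ∃ M', 0 ≤ M' ∧
      (∀ t ∈ Ioc (0:ℝ) t₂, ∃ d : ℝ, HasDerivAt r d t ∧ |d - 1| ≤ M' * t ^ γ) ∧
      StrictMonoOn r (Icc 0 t₂) := by
  obtain rfl : r = fun t => √(x t ^ 2 + y t ^ 2) := funext hr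
  obtain ⟨t₂, ht₂, ht₂t₁, hsmall⟩ := exists_lt_mul_rpow_le hγ0 M ht₁ (by norm_num : (0:ℝ) < 1 / 20)
  have hε : ∀ t ∈ Ioc 0 t₂, M * t ^ γ ≤ 1 / 20 := fun t ht =>
    (mul_le_mul_of_nonneg_left (Real.rpow_le_rpow ht.1.le ht.2 hγ0.le) hM).trans hsmall
  have hderiv : ∀ t ∈ Ioc (0:ℝ) t₂, ∃ d : ℝ,
      HasDerivAt (fun t => √(x t ^ 2 + y t ^ 2)) d t ∧ |d - 1| ≤ 3 * M * t ^ γ := fun t ht =>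
    exists_hasDerivAt_sqrt_sq_add_sq_abs_sub_one_le hM hγ0.le hxd hyd hx0 hy0 hx' hy'
      ⟨ht.1, ht.2.trans_lt ht₂t₁⟩ (hε t ht)
  refine ⟨t₂, ht₂, ht₂t₁.le, 3 * M, by positivity, hderiv, ?_⟩
  have hcont : ContinuousOn (fun t => √(x t ^ 2 + y t ^ 2)) (Icc 0 t₁) :=
    (((HasDerivWithinAt.continuousOn hxd).pow 2).add
      ((HasDerivWithinAt.continuousOn hyd).pow 2)).sqrt
  refine strictMonoOn_of_deriv_pos (convex_Icc 0 t₂) (hcont.mono (Icc_subset_Icc_right ht₂t₁.le))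
    fun t ht => ?_
  rw [interior_Icc] at ht
  obtain ⟨d, hd, hd1⟩ := hderiv t (Ioo_subset_Ioc_self ht)
  rw [hd.deriv]
  linarith [abs_le.1 hd1, hε t (Ioo_subset_Ioc_self ht)]

/-- With `x, y` as before and `r t := √(x t ² + y t ²)`, there exist
`t₂ ∈ (0, t₁]` and `M' ≥ 0` such that `r` is differentiable on `(0, t₂]` with
`|r' t - 1| ≤ M' t^γ` there; in particular `r` is strictly increasing on `[0, t₂]`. -/
theorem stmt_1 (γ t₁ M : ℝ) (hγ0 : 0 < γ) (hγ1 : γ ≤ 1) (ht₁ : 0 < t₁) (hM : 0 ≤ M)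
    (x y x' y' : ℝ → ℝ)
    (hxd : ∀ t ∈ Icc (0:ℝ) t₁, HasDerivWithinAt x (x' t) (Icc 0 t₁) t)
    (hyd : ∀ t ∈ Icc (0:ℝ) t₁, HasDerivWithinAt y (y' t) (Icc 0 t₁) t)
    (hx'c : ContinuousOn x' (Icc 0 t₁)) (hy'c : ContinuousOn y' (Icc 0 t₁))
    (hx0 : x 0 = 0) (hy0 : y 0 = 0)
    (hx' : ∀ t ∈ Icc (0:ℝ) t₁, |x' t - 1| ≤ M * t ^ γ)
    (hy' : ∀ t ∈ Icc (0:ℝ) t₁, |y' t| ≤ M * t ^ γ)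
    (r : ℝ → ℝ) (hr : ∀ t, r t = Real.sqrt ((x t) ^ 2 + (y t) ^ 2)) :
    ∃ t₂, 0 < t₂ ∧ t₂ ≤ t₁ ∧ ∃ M', 0 ≤ M' ∧
      (∀ t ∈ Ioc (0:ℝ) t₂, ∃ d : ℝ, HasDerivAt r d t ∧ |d - 1| ≤ M' * t ^ γ) ∧
      StrictMonoOn r (Icc 0 t₂) :=
  stmt_1_general γ t₁ M hγ0 ht₁ hM x y x' y' hxd hyd hx0 hy0 hx' hy' r hr
end

section
/- Let 0 < α ≤ 2 and 0 < r₀ < ρ₀, and let S := {r e^{iθ} : 0 < r < ρ₀, 0 < θ < πα} ⊂ ℂ be the circular sector of radius ρ₀ and opening angle πα. Suppose u : ℂ → ℝ is harmonic on S, u(z) ≤ 1 for all z ∈ S, and for every boundary point ζ ∈ ∂S with |ζ| > r₀ one has limsup_{S ∋ z → ζ} u(z) ≤ 0. Then for every z ∈ S with |z| > r₀, u(z) ≤ (8/π)(r₀/|z|)^{1/α}. -/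
open Set

/-- `u : ℂ → ℝ` is harmonic on an open set `U ⊂ ℂ`: it is twice continuously
differentiable on `U` and its Laplacian `∂²u/∂x² + ∂²u/∂y²` vanishes on `U`. -/
def HarmonicOnSet (u : ℂ → ℝ) (U : Set ℂ) : Prop :=
  ContDiffOn ℝ 2 u U ∧
    ∀ z ∈ U,
      iteratedFDeriv ℝ 2 u z ![1, 1] + iteratedFDeriv ℝ 2 u z ![Complex.I, Complex.I] = 0

/-- The open circular sector `{r e^{iθ} : 0 < r < ρ₀, 0 < θ < πα}`. -/
def circSector (ρ₀ α : ℝ) : Set ℂ :=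
  {z | ∃ r θ : ℝ, 0 < r ∧ r < ρ₀ ∧ 0 < θ ∧ θ < Real.pi * α ∧
      z = (r : ℂ) * Complex.exp (θ * Complex.I)}

/-!
Rotating and taking a power, `z ↦ i (e^{-iπα/2} z)^{1/α}` maps the sector `S` into the upper
half-plane, where the harmonic measure of `[-a, a]` is `arg ((w - a) / (w + a)) / π`. With
`a = r^{1/α}` this gives a harmonic barrier `b` on `S` that is at least `1/2` on `‖z‖ ≤ r` and at
most `(4/π) (r/‖z‖)^{1/α}` beyond. The harmonic function `u - 2b` then has boundary values `≤ 0` on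
`S ∩ {‖z‖ > r}`, so `u ≤ 2b` there by the weak maximum principle; the principle itself follows
from the second derivative test, after adding `ε‖z‖²` to make the Laplacian strictly positive.
Finally `r` decreases to `r₀`.
-/

open Filter Topology InnerProductSpace Laplacian Complex
open scoped Real

theorem IsLocalMax.deriv_deriv_nonpos {f : ℝ → ℝ} {a : ℝ} (h : IsLocalMax f a)
    (hc : ContinuousAt f a) : deriv (deriv f) a ≤ 0 := by
  by_contra! hpos
  have hconst : f =ᶠ[𝓝 a] fun _ => f a := by
    filter_upwards [h, isLocalMin_of_deriv_deriv_pos hpos h.deriv_eq_zero hc] with y hmax hmin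
    exact le_antisymm hmax hmin
  have hderiv : deriv f =ᶠ[𝓝 a] fun _ => 0 := by
    simpa using hconst.deriv
  simp [hderiv.deriv_eq] at hpos

section SecondDerivative

variable {E : Type*} [NormedAddCommGroup E] [NormedSpace ℝ E] {f : E → ℝ} {x : E}

theorem ContDiffAt.deriv_deriv_comp_line (hf : ContDiffAt ℝ 2 f x) (v : E) :
    deriv (deriv fun t : ℝ => f (x + t • v)) 0 = iteratedFDeriv ℝ 2 f x ![v, v] := by
  have hline : ∀ t : ℝ, HasDerivAt (fun s : ℝ => x + s • v) v t := fun t => by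
    simpa using ((hasDerivAt_id t).smul_const v).const_add x
  have hfirst : deriv (fun s : ℝ => f (x + s • v)) =ᶠ[𝓝 0]
      fun t => fderiv ℝ f (x + t • v) v := by
    have hto : Tendsto (fun t : ℝ => x + t • v) (𝓝 0) (𝓝 x) := by
      simpa using (hline 0).continuousAt.tendsto
    filter_upwards [hto.eventually (hf.eventually (by simp))] with t ht
    exact ((ht.differentiableAt (by norm_num)).hasFDerivAt.comp_hasDerivAt t (hline t)).deriv
  have hsecond : HasDerivAt (fun t : ℝ => fderiv ℝ f (x + t • v) v)
      (fderiv ℝ (fderiv ℝ f) x v v) 0 := by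
    have hdf : DifferentiableAt ℝ (fderiv ℝ f) x :=
      (hf.fderiv_right (m := 1) (by norm_num)).differentiableAt (by norm_num)
    have := (hdf.hasFDerivAt.comp_hasDerivAt_of_eq 0 (hline 0) (by simp)).clm_apply
      (hasDerivAt_const 0 v)
    simpa using this
  rw [hfirst.deriv_eq, hsecond.deriv, iteratedFDeriv_two_apply]
  rfl

theorem IsLocalMax.iteratedFDeriv_two_nonpos (h : IsLocalMax f x) (hf : ContDiffAt ℝ 2 f x)
    (v : E) : iteratedFDeriv ℝ 2 f x ![v, v] ≤ 0 := by
  rw [← hf.deriv_deriv_comp_line]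
  have hcont : Continuous fun t : ℝ => x + t • v := by fun_prop
  have hmax := IsLocalMax.comp_continuous (g := fun t : ℝ => x + t • v) (b := 0)
    (by simpa using h) hcont.continuousAt
  exact hmax.deriv_deriv_nonpos (hf.continuousAt.comp_of_eq hcont.continuousAt (by simp))

end SecondDerivative

section Laplacian

variable {E : Type*} [NormedAddCommGroup E] [InnerProductSpace ℝ E] [FiniteDimensional ℝ E]
  {f : E → ℝ} {x : E}

theorem IsLocalMax.laplacian_nonpos (h : IsLocalMax f x) (hf : ContDiffAt ℝ 2 f x) :
    Δ f x ≤ 0 := by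
  rw [laplacian_eq_iteratedFDeriv_stdOrthonormalBasis]
  exact Finset.sum_nonpos fun i _ => h.iteratedFDeriv_two_nonpos hf _

theorem laplacian_norm_sq (x : E) :
    Δ (fun y : E => ‖y‖ ^ 2) x = 2 * Module.finrank ℝ E := by
  have hsecond : ∀ v : E, iteratedFDeriv ℝ 2 (fun y : E => ‖y‖ ^ 2) x ![v, v] = 2 * ‖v‖ ^ 2 := by
    intro v
    have hlin : (2 • ⇑(innerSL ℝ) : E → E →L[ℝ] ℝ) = ⇑(2 • innerSL ℝ (E := E)) := rfl
    rw [iteratedFDeriv_two_apply, fderiv_norm_sq, hlin, ContinuousLinearMap.fderiv]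
    simp only [Matrix.cons_val_zero, Matrix.cons_val_one, FunLike.coe_smul, Pi.smul_apply]
    rw [innerSL_apply_apply, real_inner_self_eq_norm_sq, nsmul_eq_mul, Nat.cast_ofNat]
  rw [laplacian_eq_iteratedFDeriv_stdOrthonormalBasis]
  simp [hsecond, mul_comm]

end Laplacian

theorem IsOpen.exists_isLocalMax_of_frontier {X : Type*} [TopologicalSpace X] {Ω : Set X}
    (hΩ : IsOpen Ω) (hΩc : IsCompact (closure Ω)) {g : X → ℝ} (hg : ContinuousOn g Ω) {c : ℝ}
    {x : X} (hx : x ∈ Ω) (hcx : c ≤ g x) (hfr : ∀ ζ ∈ frontier Ω, ∀ᶠ y in 𝓝[Ω] ζ, g y < c) :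
    ∃ ζ ∈ Ω, IsLocalMax g ζ := by
  set K := {y ∈ Ω | c ≤ g y}
  have hKΩ : K ⊆ Ω := sep_subset _ _
  have hbelow : ∀ ζ ∈ closure Ω, ζ ∉ K → ∀ᶠ y in 𝓝[Ω] ζ, g y < c := by
    intro ζ hζ hζK
    by_cases hζΩ : ζ ∈ Ω
    · have hgζ : g ζ < c := lt_of_not_ge fun h => hζK ⟨hζΩ, h⟩
      exact ((hg.continuousAt (hΩ.mem_nhds hζΩ)).eventually_lt continuousAt_const hgζ).filter_mono
        nhdsWithin_le_nhds
    · exact hfr ζ ⟨hζ, by rwa [hΩ.interior_eq]⟩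
  have hKclosed : IsClosed K := by
    refine closure_subset_iff_isClosed.mp fun ζ hζ => ?_
    by_contra hζK
    have := mem_closure_iff_nhdsWithin_neBot.mp hζ
    obtain ⟨y, hy, hyK⟩ := (((hbelow ζ (closure_mono hKΩ hζ) hζK).filter_mono
      (nhdsWithin_mono _ hKΩ)).and self_mem_nhdsWithin).exists
    exact (not_le.mpr hy) hyK.2
  have hKc : IsCompact K := hΩc.of_isClosed_subset hKclosed (hKΩ.trans subset_closure)
  obtain ⟨ζ, hζK, hζmax⟩ := hKc.exists_isMaxOn ⟨x, hx, hcx⟩ (hg.mono hKΩ)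
  refine ⟨ζ, hζK.1, ?_⟩
  filter_upwards [hΩ.mem_nhds hζK.1] with y hy
  by_cases hyK : y ∈ K
  · exact hζmax hyK
  · exact (lt_of_not_ge fun h => hyK ⟨hy, h⟩).le.trans hζK.2

theorem nonpos_of_laplacian_nonneg {E : Type*} [NormedAddCommGroup E] [InnerProductSpace ℝ E]
    [FiniteDimensional ℝ E] [Nontrivial E] {Ω : Set E} (hΩ : IsOpen Ω)
    (hΩb : Bornology.IsBounded Ω) {f : E → ℝ} (hf : ContDiffOn ℝ 2 f Ω)
    (hΔ : ∀ x ∈ Ω, 0 ≤ Δ f x) (hfr : ∀ ζ ∈ frontier Ω, ∀ c > 0, ∀ᶠ y in 𝓝[Ω] ζ, f y < c)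
    {x : E} (hx : x ∈ Ω) : f x ≤ 0 := by
  by_contra! hpos
  obtain ⟨R, hR⟩ := hΩb.subset_closedBall 0
  set ε := f x / (2 * (R ^ 2 + 1))
  have hε : 0 < ε := by positivity
  have hεR : ∀ y ∈ Ω, ε * ‖y‖ ^ 2 < f x / 2 := by
    intro y hy
    have hy' : ‖y‖ ≤ R := by simpa using hR hy
    calc ε * ‖y‖ ^ 2 ≤ ε * R ^ 2 := by gcongr
      _ < f x / 2 := by rw [div_mul_eq_mul_div, div_lt_div_iff₀ (by positivity) two_pos]; nlinarith
  set g : E → ℝ := f + ε • fun y => ‖y‖ ^ 2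
  have hq : ContDiff ℝ 2 fun y : E => ‖y‖ ^ 2 := contDiff_norm_sq ℝ
  have hεq : ContDiff ℝ 2 (ε • fun y : E => ‖y‖ ^ 2) := hq.const_smul ε
  have hg : ContDiffOn ℝ 2 g Ω := hf.add hεq.contDiffOn
  obtain ⟨ζ, hζ, hmax⟩ := hΩ.exists_isLocalMax_of_frontier hΩb.isCompact_closure hg.continuousOn hx
    (c := f x) (by simp [g]; positivity) fun ζ hζ => by
      filter_upwards [hfr ζ hζ (f x / 2) (by positivity), self_mem_nhdsWithin] with y hy hyΩ
      simp only [g, Pi.add_apply, Pi.smul_apply, smul_eq_mul]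
      linarith [hεR y hyΩ]
  have hfζ : ContDiffAt ℝ 2 f ζ := hf.contDiffAt (hΩ.mem_nhds hζ)
  have hΔg : Δ g ζ = Δ f ζ + ε * (2 * Module.finrank ℝ E) := by
    rw [hfζ.laplacian_add hεq.contDiffAt, laplacian_smul ε hq.contDiffAt, laplacian_norm_sq,
      smul_eq_mul]
  have hΔg_nonpos := hmax.laplacian_nonpos (hg.contDiffAt (hΩ.mem_nhds hζ))
  have hdim : (0 : ℝ) < Module.finrank ℝ E := by exact_mod_cast Module.finrank_pos
  nlinarith [hΔ ζ hζ]

noncomputable def sectorRotation (α : ℝ) : ℂ := exp (-(π * α / 2 : ℝ) * I)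

theorem norm_sectorRotation (α : ℝ) : ‖sectorRotation α‖ = 1 := by
  simp [sectorRotation, norm_exp]

theorem circSector_eq {α ρ₀ : ℝ} (hα0 : 0 < α) (hα2 : α ≤ 2) :
    circSector ρ₀ α = {z | z ≠ 0 ∧ ‖z‖ < ρ₀ ∧ |arg (z * sectorRotation α)| < π * α / 2} := by
  ext z
  constructor
  · rintro ⟨r, θ, hr, hrρ, hθ0, hθα, rfl⟩
    have hψ : θ - π * α / 2 ∈ Ioc (-π) π := ⟨by nlinarith [Real.pi_pos], by nlinarith [Real.pi_pos]⟩
    have hrot : exp (θ * I) * sectorRotation α = exp ((θ - π * α / 2 : ℝ) * I) := by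
      rw [sectorRotation, ← exp_add]; push_cast; ring_nf
    refine ⟨mul_ne_zero (ofReal_ne_zero.mpr hr.ne') (exp_ne_zero _), ?_, ?_⟩
    · rwa [norm_mul, norm_exp_ofReal_mul_I, mul_one, norm_real, Real.norm_of_nonneg hr.le]
    · rw [mul_assoc, hrot, exp_mul_I, arg_mul_cos_add_sin_mul_I hr hψ, abs_lt]
      constructor <;> linarith
  · rintro ⟨hz, hzρ, harg⟩
    have hw := norm_mul_exp_arg_mul_I (z * sectorRotation α)
    rw [norm_mul, norm_sectorRotation, mul_one] at hw
    set ψ := arg (z * sectorRotation α)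
    refine ⟨‖z‖, ψ + π * α / 2, norm_pos_iff.mpr hz, hzρ, by linarith [abs_lt.mp harg],
      by linarith [abs_lt.mp harg], ?_⟩
    calc z = z * sectorRotation α * exp ((π * α / 2 : ℝ) * I) := by
          rw [sectorRotation, mul_assoc, ← exp_add]; simp
      _ = ‖z‖ * exp ((ψ + π * α / 2 : ℝ) * I) := by
          rw [← hw, mul_assoc, ← exp_add]; push_cast; ring_nf

theorem mul_sectorRotation_mem_slitPlane {α ρ₀ : ℝ} (hα0 : 0 < α) (hα2 : α ≤ 2) {z : ℂ}
    (hz : z ∈ circSector ρ₀ α) : z * sectorRotation α ∈ slitPlane := by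
  rw [circSector_eq hα0 hα2] at hz
  obtain ⟨hz0, -, harg⟩ := hz
  refine mem_slitPlane_iff_arg.mpr ⟨fun h => ?_, mul_ne_zero hz0 ?_⟩
  · rw [h, abs_of_pos Real.pi_pos] at harg
    nlinarith [Real.pi_pos]
  · rw [← norm_ne_zero_iff, norm_sectorRotation]
    exact one_ne_zero

theorem isOpen_circSector {α ρ₀ : ℝ} (hα0 : 0 < α) (hα2 : α ≤ 2) : IsOpen (circSector ρ₀ α) := by
  refine isOpen_iff_mem_nhds.mpr fun z hz => ?_
  have hslit := mul_sectorRotation_mem_slitPlane hα0 hα2 hz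
  rw [circSector_eq hα0 hα2] at hz ⊢
  obtain ⟨hz0, hzρ, harg⟩ := hz
  have hcont : ContinuousAt (fun y => |arg (y * sectorRotation α)|) z :=
    (ContinuousAt.comp (f := fun y => y * sectorRotation α) (continuousAt_arg hslit)
      (by fun_prop)).abs
  filter_upwards [eventually_ne_nhds hz0, continuous_norm.continuousAt.eventually_lt
    continuousAt_const hzρ, hcont.eventually_lt continuousAt_const harg] with y h0 hρ harg'
  exact ⟨h0, hρ, harg'⟩

theorem circSector_subset_ball (α ρ₀ : ℝ) : circSector ρ₀ α ⊆ Metric.ball 0 ρ₀ := by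
  rintro _ ⟨r, θ, hr, hrρ, -, -, rfl⟩
  simpa [norm_exp_ofReal_mul_I, abs_of_pos hr] using hrρ

/-- `z ↦ i (e^{-iπα/2} z)^{1/α}` maps the sector of opening `πα` into the upper half-plane;
rotating first keeps the principal branch of the power away from its cut even when `α > 1`. -/
noncomputable def sectorMap (α : ℝ) (z : ℂ) : ℂ :=
  I * (z * sectorRotation α) ^ ((α⁻¹ : ℝ) : ℂ)

theorem differentiableAt_sectorMap {α ρ₀ : ℝ} (hα0 : 0 < α) (hα2 : α ≤ 2) {z : ℂ}
    (hz : z ∈ circSector ρ₀ α) : DifferentiableAt ℂ (sectorMap α) z :=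
  ((differentiableAt_id.mul_const _).cpow_const
    (mul_sectorRotation_mem_slitPlane hα0 hα2 hz)).const_mul I

theorem norm_sectorMap (α : ℝ) (z : ℂ) : ‖sectorMap α z‖ = ‖z‖ ^ α⁻¹ := by
  rw [sectorMap, norm_mul, norm_I, one_mul, norm_cpow_real, norm_mul, norm_sectorRotation, mul_one]

theorem sectorMap_im_pos {α ρ₀ : ℝ} (hα0 : 0 < α) (hα2 : α ≤ 2) {z : ℂ}
    (hz : z ∈ circSector ρ₀ α) : 0 < (sectorMap α z).im := by
  have hslit := mul_sectorRotation_mem_slitPlane hα0 hα2 hz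
  rw [circSector_eq hα0 hα2] at hz
  obtain ⟨-, -, harg⟩ := hz
  rw [sectorMap, I_mul_im, cpow_ofReal_re]
  refine mul_pos (Real.rpow_pos_of_pos (norm_pos_iff.mpr (slitPlane_ne_zero hslit)) _)
    (Real.cos_pos_of_mem_Ioo ?_)
  have hbound : |arg (z * sectorRotation α) * α⁻¹| < π / 2 := by
    rw [abs_mul, abs_inv, abs_of_pos hα0, ← div_eq_mul_inv, div_lt_iff₀ hα0]
    linarith
  exact ⟨by linarith [neg_abs_le (arg (z * sectorRotation α) * α⁻¹)],
    (le_abs_self _).trans_lt hbound⟩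

theorem AnalyticAt.harmonicAt_arg {f : ℂ → ℂ} {z : ℂ} (hf : AnalyticAt ℂ f z)
    (hz : f z ∈ slitPlane) : HarmonicAt (fun z => arg (f z)) z := by
  simpa only [log_im, Function.comp_def] using ((analyticAt_clog hz).comp hf).harmonicAt_im

/-- The harmonic measure of `[-a, a]` seen from `w` in the upper half-plane. -/
noncomputable def halfPlaneHarmonicMeasure (a : ℝ) (w : ℂ) : ℝ := arg ((w - a) / (w + a)) / π

section halfPlaneHarmonicMeasure

variable {a : ℝ} {w : ℂ}

theorem add_ofReal_ne_zero_of_im_pos (hw : 0 < w.im) : w + a ≠ 0 := fun h => by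
  simpa [hw.ne'] using congrArg im h

theorem normSq_add_ofReal_pos (hw : 0 < w.im) : 0 < normSq (w + a) :=
  normSq_pos.mpr (add_ofReal_ne_zero_of_im_pos hw)

theorem im_div_add_ofReal (hw : 0 < w.im) :
    ((w - a) / (w + a)).im = 2 * a * w.im / normSq (w + a) := by
  have := normSq_add_ofReal_pos (a := a) hw
  rw [div_im]
  simp only [sub_im, sub_re, add_im, add_re, ofReal_im, ofReal_re, sub_zero, add_zero]
  field_simp
  ring

theorem re_div_add_ofReal (hw : 0 < w.im) :
    ((w - a) / (w + a)).re = (‖w‖ ^ 2 - a ^ 2) / normSq (w + a) := by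
  have := normSq_add_ofReal_pos (a := a) hw
  rw [div_re, Complex.sq_norm]
  simp only [sub_im, sub_re, add_im, add_re, ofReal_im, ofReal_re, sub_zero, add_zero,
    normSq_apply]
  field_simp
  ring

theorem im_div_add_ofReal_pos (ha : 0 < a) (hw : 0 < w.im) : 0 < ((w - a) / (w + a)).im := by
  have := normSq_add_ofReal_pos (a := a) hw
  rw [im_div_add_ofReal hw]
  positivity

theorem halfPlaneHarmonicMeasure_nonneg (ha : 0 < a) (hw : 0 < w.im) :
    0 ≤ halfPlaneHarmonicMeasure a w :=
  div_nonneg (arg_nonneg_iff.mpr (im_div_add_ofReal_pos ha hw).le) Real.pi_pos.le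

theorem one_half_le_halfPlaneHarmonicMeasure (ha : 0 < a) (hw : 0 < w.im) (hwa : ‖w‖ ≤ a) :
    1 / 2 ≤ halfPlaneHarmonicMeasure a w := by
  have hre : ((w - a) / (w + a)).re ≤ 0 := by
    rw [re_div_add_ofReal hw]
    exact div_nonpos_of_nonpos_of_nonneg (by nlinarith [norm_nonneg w]) (normSq_nonneg _)
  have harg : π / 2 ≤ arg ((w - a) / (w + a)) := by
    refine not_lt.mp fun h => ?_
    rcases arg_lt_pi_div_two_iff.mp h with h | h | h
    · linarith
    · linarith [im_div_add_ofReal_pos ha hw]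
    · simpa [h] using im_div_add_ofReal_pos ha hw
  rw [halfPlaneHarmonicMeasure, le_div_iff₀ Real.pi_pos]
  linarith

theorem halfPlaneHarmonicMeasure_le (ha : 0 < a) (hw : 0 < w.im) (haw : a < ‖w‖) :
    halfPlaneHarmonicMeasure a w ≤ 4 * a / (π * ‖w‖) := by
  set G := (w - a) / (w + a)
  have hG_re : 0 < G.re := by
    rw [re_div_add_ofReal hw]
    exact div_pos (by nlinarith) (normSq_add_ofReal_pos hw)
  have harg_lt : arg G < π / 2 := arg_lt_pi_div_two_iff.mpr (Or.inl hG_re)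
  have hw0 : 0 < ‖w‖ := ha.trans haw
  rw [halfPlaneHarmonicMeasure, div_le_div_iff₀ Real.pi_pos (by positivity)]
  rcases le_or_gt (2 * a) ‖w‖ with hfar | hnear
  · have harg : arg G ≤ G.im / G.re := by
      rw [← tan_arg]
      exact Real.le_tan (arg_nonneg_iff.mpr (im_div_add_ofReal_pos ha hw).le) harg_lt
    have hratio : G.im / G.re = 2 * a * w.im / (‖w‖ ^ 2 - a ^ 2) := by
      have := normSq_add_ofReal_pos (a := a) hw
      rw [im_div_add_ofReal hw, re_div_add_ofReal hw]
      field_simp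
    have him : w.im ≤ ‖w‖ := im_le_norm w
    have hden : ‖w‖ ^ 2 / 2 ≤ ‖w‖ ^ 2 - a ^ 2 := by nlinarith
    have : 2 * a * w.im / (‖w‖ ^ 2 - a ^ 2) ≤ 4 * a / ‖w‖ := by
      rw [div_le_div_iff₀ (by nlinarith) hw0]
      nlinarith [mul_le_mul_of_nonneg_left him (by positivity : 0 ≤ 2 * a * ‖w‖)]
    calc arg G * (π * ‖w‖) ≤ 4 * a / ‖w‖ * (π * ‖w‖) := by
          gcongr; exact harg.trans (hratio.le.trans this)
      _ = 4 * a * π := by field_simp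
  · have harg0 : 0 ≤ arg G := arg_nonneg_iff.mpr (im_div_add_ofReal_pos ha hw).le
    calc arg G * (π * ‖w‖) ≤ π / 2 * (π * (2 * a)) := by gcongr
      _ = π * a * π := by ring
      _ ≤ 4 * a * π := by gcongr; exact Real.pi_le_four

end halfPlaneHarmonicMeasure

theorem AnalyticAt.harmonicAt_halfPlaneHarmonicMeasure_comp {a : ℝ} (ha : 0 < a) {f : ℂ → ℂ}
    {z : ℂ} (hf : AnalyticAt ℂ f z) (hz : 0 < (f z).im) :
    HarmonicAt (fun z => halfPlaneHarmonicMeasure a (f z)) z := by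
  have hG : AnalyticAt ℂ (fun z => (f z - a) / (f z + a)) z :=
    (hf.sub analyticAt_const).div (hf.add analyticAt_const) (add_ofReal_ne_zero_of_im_pos hz)
  have hslit : (f z - a) / (f z + a) ∈ slitPlane :=
    mem_slitPlane_iff.mpr (Or.inr (im_div_add_ofReal_pos ha hz).ne')
  convert (hG.harmonicAt_arg hslit).const_smul (c := π⁻¹) using 1
  ext y
  simp [halfPlaneHarmonicMeasure, div_eq_inv_mul]

theorem HarmonicOnSet.harmonicOnNhd {u : ℂ → ℝ} {U : Set ℂ} (hu : HarmonicOnSet u U)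
    (hU : IsOpen U) : HarmonicOnNhd u U := fun z hz =>
  ⟨hu.1.contDiffAt (hU.mem_nhds hz), by
    filter_upwards [hU.mem_nhds hz] with y hy
    rw [laplacian_eq_iteratedFDeriv_complexPlane]
    exact hu.2 y hy⟩

noncomputable def sectorBarrier (α r : ℝ) (z : ℂ) : ℝ :=
  halfPlaneHarmonicMeasure (r ^ α⁻¹) (sectorMap α z)

section sectorBarrier

variable {α ρ₀ r : ℝ} {z : ℂ}

theorem sectorBarrier_nonneg (hα0 : 0 < α) (hα2 : α ≤ 2) (hr : 0 < r)
    (hz : z ∈ circSector ρ₀ α) : 0 ≤ sectorBarrier α r z :=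
  halfPlaneHarmonicMeasure_nonneg (Real.rpow_pos_of_pos hr _) (sectorMap_im_pos hα0 hα2 hz)

theorem harmonicAt_sectorBarrier (hα0 : 0 < α) (hα2 : α ≤ 2) (hr : 0 < r)
    (hz : z ∈ circSector ρ₀ α) : HarmonicAt (sectorBarrier α r) z :=
  AnalyticAt.harmonicAt_halfPlaneHarmonicMeasure_comp (Real.rpow_pos_of_pos hr _)
    (DifferentiableOn.analyticAt (fun _ hy => (differentiableAt_sectorMap hα0 hα2 hy)
      |>.differentiableWithinAt) ((isOpen_circSector hα0 hα2).mem_nhds hz))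
    (sectorMap_im_pos hα0 hα2 hz)

theorem one_half_le_sectorBarrier (hα0 : 0 < α) (hα2 : α ≤ 2) (hr : 0 < r)
    (hz : z ∈ circSector ρ₀ α) (hzr : ‖z‖ ≤ r) : 1 / 2 ≤ sectorBarrier α r z :=
  one_half_le_halfPlaneHarmonicMeasure (Real.rpow_pos_of_pos hr _) (sectorMap_im_pos hα0 hα2 hz)
    (by rw [norm_sectorMap]; exact Real.rpow_le_rpow (norm_nonneg z) hzr (by positivity))

theorem sectorBarrier_le (hα0 : 0 < α) (hα2 : α ≤ 2) (hr : 0 < r)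
    (hz : z ∈ circSector ρ₀ α) (hzr : r < ‖z‖) :
    sectorBarrier α r z ≤ 4 / π * (r / ‖z‖) ^ (1 / α) := by
  have h := halfPlaneHarmonicMeasure_le (Real.rpow_pos_of_pos hr _) (sectorMap_im_pos hα0 hα2 hz)
    (by rw [norm_sectorMap]; exact Real.rpow_lt_rpow hr.le hzr (by positivity))
  rw [norm_sectorMap] at h
  rw [sectorBarrier, one_div, Real.div_rpow hr.le (norm_nonneg z)]
  convert h using 1
  field_simp

end sectorBarrier

theorem HarmonicOnSet.eventually_sub_sectorBarrier_lt {α ρ₀ r c : ℝ} (hα0 : 0 < α) (hα2 : α ≤ 2)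
    (hr : 0 < r) {u : ℂ → ℝ} (hu : HarmonicOnSet u (circSector ρ₀ α))
    (hub : ∀ z ∈ circSector ρ₀ α, u z ≤ 1)
    (hbd : ∀ ζ ∈ frontier (circSector ρ₀ α), r ≤ ‖ζ‖ → limsup u (𝓝[circSector ρ₀ α] ζ) ≤ 0)
    {ζ : ℂ} (hζ : ζ ∈ frontier (circSector ρ₀ α ∩ {y | r < ‖y‖})) (hc : 0 < c) :
    ∀ᶠ y in 𝓝[circSector ρ₀ α ∩ {y | r < ‖y‖}] ζ, u y - 2 * sectorBarrier α r y < c := by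
  set S := circSector ρ₀ α
  have hS : IsOpen S := isOpen_circSector hα0 hα2
  have hΩS : S ∩ {y | r < ‖y‖} ⊆ S := inter_subset_left
  have hζr : r ≤ ‖ζ‖ := closure_minimal (fun y (hy : y ∈ S ∩ {y | r < ‖y‖}) => hy.2.le)
    (isClosed_le continuous_const continuous_norm) hζ.1
  by_cases hζS : ζ ∈ S
  · have hζ_le : ‖ζ‖ ≤ r := not_lt.mp fun h => hζ.2 <| by
      rw [(hS.inter (isOpen_lt continuous_const continuous_norm)).interior_eq]; exact ⟨hζS, h⟩
    have hζ_lt : u ζ - 2 * sectorBarrier α r ζ < c := by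
      linarith [hub ζ hζS, one_half_le_sectorBarrier hα0 hα2 hr hζS hζ_le]
    have hcont : ContinuousAt (fun y => u y - 2 * sectorBarrier α r y) ζ :=
      (hu.1.continuousOn.continuousAt (hS.mem_nhds hζS)).sub
        ((harmonicAt_sectorBarrier hα0 hα2 hr hζS).1.continuousAt.const_mul 2)
    exact (hcont.eventually_lt continuousAt_const hζ_lt).filter_mono nhdsWithin_le_nhds
  · have hζS' : ζ ∈ frontier S := ⟨closure_mono hΩS hζ.1, by rwa [hS.interior_eq]⟩
    have hbdd : IsBoundedUnder (· ≤ ·) (𝓝[S] ζ) u :=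
      ⟨1, eventually_map.mpr (eventually_mem_nhdsWithin.mono hub)⟩
    have hu_lt : ∀ᶠ y in 𝓝[S] ζ, u y < c :=
      eventually_lt_of_limsup_lt ((hbd ζ hζS' hζr).trans_lt hc) hbdd
    filter_upwards [nhdsWithin_mono ζ hΩS hu_lt, self_mem_nhdsWithin] with y hy hyΩ
    linarith [sectorBarrier_nonneg hα0 hα2 hr (hΩS hyΩ)]

theorem HarmonicOnSet.le_of_circSector_of_frontier_limsup_nonpos {α ρ₀ r : ℝ} (hα0 : 0 < α)
    (hα2 : α ≤ 2) (hr : 0 < r) {u : ℂ → ℝ} (hu : HarmonicOnSet u (circSector ρ₀ α))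
    (hub : ∀ z ∈ circSector ρ₀ α, u z ≤ 1)
    (hbd : ∀ ζ ∈ frontier (circSector ρ₀ α), r ≤ ‖ζ‖ → limsup u (𝓝[circSector ρ₀ α] ζ) ≤ 0)
    {z : ℂ} (hz : z ∈ circSector ρ₀ α) (hzr : r < ‖z‖) :
    u z ≤ 8 / π * (r / ‖z‖) ^ (1 / α) := by
  set S := circSector ρ₀ α
  have hS : IsOpen S := isOpen_circSector hα0 hα2
  have hw : ∀ y ∈ S, HarmonicAt (fun y => u y - 2 * sectorBarrier α r y) y := fun y hy =>
    (hu.harmonicOnNhd hS y hy).sub ((harmonicAt_sectorBarrier hα0 hα2 hr hy).const_smul (c := 2))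
  have hΩS : S ∩ {y | r < ‖y‖} ⊆ S := inter_subset_left
  have hmax := nonpos_of_laplacian_nonneg (hS.inter (isOpen_lt continuous_const continuous_norm))
    (Metric.isBounded_ball.subset (hΩS.trans (circSector_subset_ball α ρ₀)))
    (fun y hy => (hw y (hΩS hy)).1.contDiffWithinAt)
    (fun y hy => ((hw y (hΩS hy)).2.self_of_nhds).symm.le)
    (fun ζ hζ c hc => hu.eventually_sub_sectorBarrier_lt hα0 hα2 hr hub hbd hζ hc) ⟨hz, hzr⟩
  calc u z ≤ 2 * sectorBarrier α r z := by linarith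
    _ ≤ 2 * (4 / π * (r / ‖z‖) ^ (1 / α)) := by gcongr; exact sectorBarrier_le hα0 hα2 hr hz hzr
    _ = 8 / π * (r / ‖z‖) ^ (1 / α) := by ring

theorem stmt_4_general (α r₀ ρ₀ : ℝ) (hα0 : 0 < α) (hα2 : α ≤ 2) (hr₀ : 0 < r₀)
    (u : ℂ → ℝ) (hu : HarmonicOnSet u (circSector ρ₀ α))
    (hub : ∀ z ∈ circSector ρ₀ α, u z ≤ 1)
    (hbd : ∀ ζ ∈ frontier (circSector ρ₀ α), r₀ < ‖ζ‖ →
      Filter.limsup u (nhdsWithin ζ (circSector ρ₀ α)) ≤ 0) :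
    ∀ z ∈ circSector ρ₀ α, r₀ < ‖z‖ →
      u z ≤ (8 / Real.pi) * (r₀ / ‖z‖) ^ (1 / α) := by
  intro z hz hzr
  -- the bound for radius `r` needs the boundary hypothesis on `‖ζ‖ = r` itself
  have hbound : ∀ r ∈ Ioo r₀ ‖z‖, u z ≤ 8 / π * (r / ‖z‖) ^ (1 / α) := fun r hr =>
    hu.le_of_circSector_of_frontier_limsup_nonpos hα0 hα2 (hr₀.trans hr.1) hub
      (fun ζ hζ hζr => hbd ζ hζ (hr.1.trans_le hζr)) hz hr.2
  have hcont : ContinuousAt (fun r => 8 / π * (r / ‖z‖) ^ (1 / α)) r₀ :=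
    continuousAt_const.mul ((continuousAt_id.div_const _).rpow_const
      (Or.inl (div_pos hr₀ (hr₀.trans hzr)).ne'))
  refine ge_of_tendsto (hcont.tendsto.mono_left (nhdsWithin_le_nhds (s := Ioi r₀))) ?_
  filter_upwards [Ioo_mem_nhdsGT hzr] using hbound

/-- On the circular sector `S` of radius `ρ₀` and opening `πα`, any
harmonic `u ≤ 1` whose boundary limsup is `≤ 0` on `∂S ∩ {|ζ| > r₀}` satisfies
`u z ≤ (8/π)(r₀/|z|)^{1/α}` for `z ∈ S` with `|z| > r₀`. -/
theorem stmt_4 (α r₀ ρ₀ : ℝ) (hα0 : 0 < α) (hα2 : α ≤ 2) (hr₀ : 0 < r₀) (hr : r₀ < ρ₀)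
    (u : ℂ → ℝ) (hu : HarmonicOnSet u (circSector ρ₀ α))
    (hub : ∀ z ∈ circSector ρ₀ α, u z ≤ 1)
    (hbd : ∀ ζ ∈ frontier (circSector ρ₀ α), r₀ < ‖ζ‖ →
      Filter.limsup u (nhdsWithin ζ (circSector ρ₀ α)) ≤ 0) :
    ∀ z ∈ circSector ρ₀ α, r₀ < ‖z‖ →
      u z ≤ (8 / Real.pi) * (r₀ / ‖z‖) ^ (1 / α) :=
  stmt_4_general α r₀ ρ₀ hα0 hα2 hr₀ u hu hub hbd
end

section
/- Let 0 < α ≤ 2, set b := 1/(2α), and let a > 0. For 0 < R < a^α define G(R) := 2 ∫_0^R (1/π) [ 2 r^{2b−1} log(a^α/r) + ∑_{j=1}^∞ α r^{2b−1} (1 − (r/a^α)^{2j/α}) / (j(j+1)) ] dr. Then there exist constants C > 0 and R̄ ∈ (0, min(a^α, 1)) such that |G(R) − (2/(πb)) R^{2b} log(1/R)| ≤ C R^{2b} for all R ∈ (0, R̄). In particular, for every ε > 0 there exists R̄' > 0 such that G(R) ≥ (1 − ε)(2/(πb)) R^{2b} log(1/R) for all R ∈ (0, R̄'). -/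
/-!
With `A = a ^ α` and `s = 2b`, the logarithmic part of the integrand has the explicit primitive
`r ^ s / s * (log (A / r) + 1 / s)`, so it contributes exactly
`(2 / (π b)) R ^ (2b) (log (1 / R) + log A + 1 / (2b))`. For `r ≤ A` every term
`(1 - (r/A)^{2j/α}) / (j (j+1))` of the series lies between `0` and `1 / (j (j+1))`, so by
telescoping the series lies in `[0, 1]` and its part of the integral is `O(R ^ (2b))`.
The lower bound follows because `log (1 / R) → ∞` as `R → 0⁺`.
-/

open Set MeasureTheory intervalIntegral Real Filter Topology

lemma sum_range_one_div_succ_mul_succ_succ_le_one (n : ℕ) :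
    ∑ j ∈ Finset.range n, 1 / (((j:ℝ) + 1) * ((j:ℝ) + 2)) ≤ 1 := by
  have telescope : ∀ j : ℕ, 1 / (((j:ℝ) + 1) * ((j:ℝ) + 2))
      = 1 / ((j:ℝ) + 1) - 1 / (((j + 1 : ℕ) : ℝ) + 1) := by
    intro j
    push_cast
    field_simp
    ring
  rw [Finset.sum_congr rfl fun j _ => telescope j, Finset.sum_range_sub']
  have : (0:ℝ) ≤ 1 / ((n:ℝ) + 1) := by positivity
  norm_num
  linarith

lemma tsum_mul_one_div_succ_mul_succ_succ_mem_Icc {c : ℕ → ℝ} (hc : ∀ j, c j ∈ Icc 0 1) :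
    ∑' j : ℕ, c j / (((j:ℝ) + 1) * ((j:ℝ) + 2)) ∈ Icc 0 1 := by
  have hw : ∀ j : ℕ, 0 ≤ 1 / (((j:ℝ) + 1) * ((j:ℝ) + 2)) := fun j => by positivity
  have hle : ∀ j : ℕ, c j / (((j:ℝ) + 1) * ((j:ℝ) + 2)) ≤ 1 / (((j:ℝ) + 1) * ((j:ℝ) + 2)) :=
    fun j => div_le_div_of_nonneg_right (hc j).2 (by positivity)
  have hnn : ∀ j : ℕ, 0 ≤ c j / (((j:ℝ) + 1) * ((j:ℝ) + 2)) :=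
    fun j => div_nonneg (hc j).1 (by positivity)
  have hsum := summable_of_sum_range_le hw sum_range_one_div_succ_mul_succ_succ_le_one
  exact ⟨tsum_nonneg hnn, ((hsum.of_nonneg_of_le hnn hle).tsum_le_tsum hle hsum).trans
    (Real.tsum_le_of_sum_range_le hw sum_range_one_div_succ_mul_succ_succ_le_one)⟩

lemma continuousOn_log_mul_rpow {s : ℝ} (hs : 0 < s) :
    ContinuousOn (fun x => log x * x ^ s) (Ici 0) := by
  intro x hx
  rcases (mem_Ici.mp hx).eq_or_lt with rfl | hx
  · rw [← continuousWithinAt_Ioi_iff_Ici, ContinuousWithinAt]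
    simpa [zero_rpow hs.ne'] using tendsto_log_mul_rpow_nhdsGT_zero hs
  · exact ((continuousAt_log hx.ne').mul
      (continuousAt_rpow_const x s (Or.inl hx.ne'))).continuousWithinAt

section PowerLogIntegral

variable {s c R : ℝ}

lemma continuousOn_primitive_rpow_sub_one_mul_log_div (hs : 0 < s) :
    ContinuousOn (fun r => r ^ s / s * (log c - log r + 1 / s)) (Ici 0) := by
  have hF : (fun r => r ^ s / s * (log c - log r + 1 / s))
      = fun r => r ^ s / s * (log c + 1 / s) - log r * r ^ s / s := by
    funext r; ring
  rw [hF]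
  exact (((continuous_rpow_const hs.le).div_const s).mul continuous_const).continuousOn.sub
    ((continuousOn_log_mul_rpow hs).div_const s)

lemma hasDerivAt_primitive_rpow_sub_one_mul_log_div {x : ℝ} (hs : 0 < s) (hc : 0 < c) (hx : 0 < x) :
    HasDerivAt (fun r => r ^ s / s * (log c - log r + 1 / s))
      (x ^ (s - 1) * log (c / x)) x := by
  refine (((hasDerivAt_rpow_const (p := s) (Or.inl hx.ne')).div_const s).mul
    (((hasDerivAt_log hx.ne').const_sub (log c)).add_const (1 / s))).congr_deriv ?_
  rw [log_div hc.ne' hx.ne', rpow_sub_one hx.ne']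
  field_simp
  ring

lemma intervalIntegrable_rpow_sub_one_mul_log_div (hs : 0 < s) (hR : 0 ≤ R) (hRc : R ≤ c) :
    IntervalIntegrable (fun r => r ^ (s - 1) * log (c / r)) volume 0 R := by
  rw [intervalIntegrable_iff_integrableOn_Ioc_of_le hR]
  refine integrableOn_deriv_of_nonneg
    ((continuousOn_primitive_rpow_sub_one_mul_log_div (c := c) hs).mono Icc_subset_Ici_self)
    (fun x hx => hasDerivAt_primitive_rpow_sub_one_mul_log_div hs (hx.1.trans (hx.2.trans_le hRc)) hx.1)
    fun x hx => mul_nonneg (rpow_nonneg hx.1.le _)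
      (log_nonneg ((one_le_div hx.1).mpr (hx.2.le.trans hRc)))

lemma integral_rpow_sub_one_mul_log_div (hs : 0 < s) (hR : 0 ≤ R) (hRc : R ≤ c) :
    ∫ r in 0..R, r ^ (s - 1) * log (c / r) = R ^ s / s * (log c - log R + 1 / s) := by
  rw [integral_eq_sub_of_hasDerivAt_of_le hR
    ((continuousOn_primitive_rpow_sub_one_mul_log_div hs).mono Icc_subset_Ici_self)
    (fun x hx => hasDerivAt_primitive_rpow_sub_one_mul_log_div hs (hx.1.trans (hx.2.trans_le hRc)) hx.1)
    (intervalIntegrable_rpow_sub_one_mul_log_div hs hR hRc)]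
  simp [zero_rpow hs.ne']

lemma intervalIntegrable_rpow_sub_one_mul {g : ℝ → ℝ} (hs : 0 < s) (hR : 0 ≤ R)
    (hg : ContinuousOn g (Icc 0 R)) :
    IntervalIntegrable (fun r => r ^ (s - 1) * g r) volume 0 R :=
  (intervalIntegrable_rpow' (by linarith)).mul_continuousOn (by rwa [uIcc_of_le hR])

lemma integral_rpow_sub_one_mul_mem_Icc {g : ℝ → ℝ} (hs : 0 < s) (hR : 0 ≤ R)
    (hg : ContinuousOn g (Icc 0 R)) (hg01 : ∀ r ∈ Icc 0 R, g r ∈ Icc 0 1) :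
    ∫ r in 0..R, r ^ (s - 1) * g r ∈ Icc 0 (R ^ s / s) := by
  refine ⟨integral_nonneg hR fun r hr => mul_nonneg (rpow_nonneg hr.1 _) (hg01 r hr).1, ?_⟩
  calc ∫ r in 0..R, r ^ (s - 1) * g r ≤ ∫ r in 0..R, r ^ (s - 1) :=
        integral_mono_on hR (intervalIntegrable_rpow_sub_one_mul hs hR hg)
          (intervalIntegrable_rpow' (by linarith)) fun r hr =>
          mul_le_of_le_one_right (rpow_nonneg hr.1 _) (hg01 r hr).2
    _ = R ^ s / s := by
        rw [integral_rpow (Or.inl (by linarith)), sub_add_cancel, zero_rpow hs.ne', sub_zero]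

end PowerLogIntegral

/-- The series `∑_{j ≥ 1} (1 - (r/A)^{2j/α}) / (j (j+1))` of the paper, indexed from `j = 0`. -/
noncomputable def balayageSeries (α A r : ℝ) : ℝ :=
  ∑' j : ℕ, (1 - (r / A) ^ (2 * ((j:ℝ) + 1) / α)) / (((j:ℝ) + 1) * ((j:ℝ) + 2))

section BalayageSeries

variable {α A : ℝ}

lemma one_sub_div_rpow_mem_Icc {r e : ℝ} (hA : 0 < A) (hr : r ∈ Icc 0 A) (he : 0 ≤ e) :
    1 - (r / A) ^ e ∈ Icc 0 1 := by
  have hx0 : 0 ≤ r / A := div_nonneg hr.1 hA.le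
  have hx1 : r / A ≤ 1 := (div_le_one hA).mpr hr.2
  exact ⟨sub_nonneg.mpr (rpow_le_one hx0 hx1 he), sub_le_self _ (rpow_nonneg hx0 _)⟩

lemma balayageSeries_mem_Icc {r : ℝ} (hα : 0 ≤ α) (hA : 0 < A) (hr : r ∈ Icc 0 A) :
    balayageSeries α A r ∈ Icc 0 1 :=
  tsum_mul_one_div_succ_mul_succ_succ_mem_Icc fun _ =>
    one_sub_div_rpow_mem_Icc hA hr (by positivity)

lemma continuousOn_balayageSeries (hα : 0 ≤ α) (hA : 0 < A) :
    ContinuousOn (balayageSeries α A) (Icc 0 A) := by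
  refine continuousOn_tsum (fun j => ?_)
    (summable_of_sum_range_le (fun j => by positivity) sum_range_one_div_succ_mul_succ_succ_le_one)
    fun j r hr => ?_
  · exact (continuousOn_const.sub ((continuousOn_id.div_const A).rpow_const
      fun _ _ => Or.inr (by positivity))).div_const _
  · have h := one_sub_div_rpow_mem_Icc hA hr (e := 2 * ((j:ℝ) + 1) / α) (by positivity)
    rw [norm_div, Real.norm_of_nonneg h.1, Real.norm_of_nonneg (by positivity)]
    exact div_le_div_of_nonneg_right h.2 (by positivity)

variable {s R : ℝ}

lemma intervalIntegrable_rpow_sub_one_mul_balayageSeries (hα : 0 ≤ α) (hA : 0 < A)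
    (hs : 0 < s) (hR : 0 ≤ R) (hRA : R ≤ A) :
    IntervalIntegrable (fun r => r ^ (s - 1) * balayageSeries α A r) volume 0 R :=
  intervalIntegrable_rpow_sub_one_mul hs hR
    ((continuousOn_balayageSeries hα hA).mono (Icc_subset_Icc_right hRA))

lemma integral_rpow_sub_one_mul_balayageSeries_mem_Icc (hα : 0 ≤ α) (hA : 0 < A)
    (hs : 0 < s) (hR : 0 ≤ R) (hRA : R ≤ A) :
    ∫ r in 0..R, r ^ (s - 1) * balayageSeries α A r ∈ Icc 0 (R ^ s / s) :=
  integral_rpow_sub_one_mul_mem_Icc hs hR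
    ((continuousOn_balayageSeries hα hA).mono (Icc_subset_Icc_right hRA))
    fun _ hr => balayageSeries_mem_Icc hα hA ⟨hr.1, hr.2.trans hRA⟩

end BalayageSeries

/-- The mass `G(R)` of the paper, for the sector of radius `A = a ^ α`. -/
noncomputable def balayageMass (α A b R : ℝ) : ℝ :=
  2 * ∫ r in (0:ℝ)..R, (1 / π) *
    (2 * r ^ (2 * b - 1) * log (A / r) +
      ∑' j : ℕ, α * r ^ (2 * b - 1) * (1 - (r / A) ^ (2 * ((j:ℝ) + 1) / α)) /
        (((j:ℝ) + 1) * ((j:ℝ) + 2)))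

section BalayageMass

variable {α A b R : ℝ}

lemma balayageMass_eq (hα : 0 ≤ α) (hA : 0 < A) (hb : 0 < b) (hR : 0 ≤ R) (hRA : R ≤ A) :
    balayageMass α A b R = 2 / π * (2 * (R ^ (2 * b) / (2 * b) *
      (log A - log R + 1 / (2 * b))) + α * ∫ r in 0..R, r ^ (2 * b - 1) * balayageSeries α A r) := by
  have hs : 0 < 2 * b := by positivity
  have hseries : ∀ r : ℝ, ∑' j : ℕ, α * r ^ (2 * b - 1) * (1 - (r / A) ^ (2 * ((j:ℝ) + 1) / α)) /
      (((j:ℝ) + 1) * ((j:ℝ) + 2)) = α * (r ^ (2 * b - 1) * balayageSeries α A r) := fun r => by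
    rw [balayageSeries, ← tsum_mul_left, ← tsum_mul_left]
    exact tsum_congr fun j => by ring
  have hlog := intervalIntegrable_rpow_sub_one_mul_log_div hs hR hRA
  have hser := intervalIntegrable_rpow_sub_one_mul_balayageSeries hα hA hs hR hRA
  rw [balayageMass]
  simp_rw [hseries, mul_assoc]
  rw [intervalIntegral.integral_const_mul, integral_add (hlog.const_mul 2) (hser.const_mul α),
    intervalIntegral.integral_const_mul, intervalIntegral.integral_const_mul,
    integral_rpow_sub_one_mul_log_div hs hR hRA]
  ring

lemma abs_balayageMass_sub_le (hα : 0 ≤ α) (hA : 0 < A) (hb : 0 < b) (hR : 0 < R)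
    (hRA : R ≤ A) :
    |balayageMass α A b R - 2 / (π * b) * R ^ (2 * b) * log (1 / R)|
      ≤ 2 / (π * b) * (|log A| + 1 / (2 * b) + α / 2) * R ^ (2 * b) := by
  have hs : 0 < 2 * b := by positivity
  obtain ⟨hI0, hI1⟩ := integral_rpow_sub_one_mul_balayageSeries_mem_Icc hα hA hs hR.le hRA
  rw [balayageMass_eq hα hA hb hR.le hRA, one_div R, log_inv]
  generalize ∫ r in 0..R, r ^ (2 * b - 1) * balayageSeries α A r = I at hI0 hI1 ⊢
  set u := 2 / (π * b) * R ^ (2 * b) with hu_def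
  have hu : 0 < u := by positivity
  have herror : 2 / π * (2 * (R ^ (2 * b) / (2 * b) * (log A - log R + 1 / (2 * b))) + α * I)
      - u * -log R = u * (log A + 1 / (2 * b)) + 2 * α / π * I := by
    rw [hu_def]
    field_simp
    ring
  have hI : 2 * α / π * I ≤ u * (α / 2) := by
    calc 2 * α / π * I ≤ 2 * α / π * (R ^ (2 * b) / (2 * b)) :=
          mul_le_mul_of_nonneg_left hI1 (by positivity)
      _ = u * (α / 2) := by rw [hu_def]; field_simp
  rw [herror]
  calc |u * (log A + 1 / (2 * b)) + 2 * α / π * I|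
      ≤ u * (|log A| + 1 / (2 * b)) + u * (α / 2) := by
        refine (abs_add_le _ _).trans (add_le_add ?_ ?_)
        · rw [abs_mul, abs_of_pos hu]
          exact mul_le_mul_of_nonneg_left ((abs_add_le _ _).trans
            (by rw [abs_of_pos (by positivity : (0:ℝ) < 1 / (2 * b))])) hu.le
        · rwa [abs_of_nonneg (by positivity)]
    _ = 2 / (π * b) * (|log A| + 1 / (2 * b) + α / 2) * R ^ (2 * b) := by ring

end BalayageMass

lemma exists_forall_ge_one_sub_mul_of_abs_sub_le {G : ℝ → ℝ} {c C s ρ ε : ℝ} (hc : 0 < c)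
    (hρ : 0 < ρ) (hε : 0 < ε)
    (h : ∀ R ∈ Ioo 0 ρ, |G R - c * R ^ s * log (1 / R)| ≤ C * R ^ s) :
    ∃ ρ' > 0, ∀ R ∈ Ioo 0 ρ', G R ≥ (1 - ε) * c * R ^ s * log (1 / R) := by
  have hlog : Tendsto (fun R : ℝ => log (1 / R)) (𝓝[>] 0) atTop := by
    simpa only [one_div, Function.comp_def] using tendsto_log_atTop.comp tendsto_inv_nhdsGT_zero
  have hev : ∀ᶠ R in 𝓝[>] 0, G R ≥ (1 - ε) * c * R ^ s * log (1 / R) := by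
    filter_upwards [hlog.eventually_ge_atTop (C / (ε * c)), Ioo_mem_nhdsGT hρ] with R hL hR
    have hG := (abs_le.mp (h R hR)).1
    have hRs : 0 < R ^ s := rpow_pos_of_pos hR.1 s
    have hC : C ≤ ε * c * log (1 / R) := (div_le_iff₀' (by positivity)).mp hL
    nlinarith
  obtain ⟨ρ', hρ', hsub⟩ := mem_nhdsGT_iff_exists_Ioo_subset.mp hev
  exact ⟨ρ', hρ', fun R hR => hsub hR⟩

theorem stmt_11_general (α a b : ℝ) (hα0 : 0 < α) (ha : 0 < a)
    (hb : b = 1 / (2 * α)) (G : ℝ → ℝ)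
    (hG : ∀ R : ℝ, G R = 2 * ∫ r in (0:ℝ)..R, (1 / Real.pi) *
      (2 * r ^ (2 * b - 1) * Real.log (a ^ α / r) +
        ∑' j : ℕ, α * r ^ (2 * b - 1) * (1 - (r / a ^ α) ^ (2 * ((j:ℝ) + 1) / α)) /
          (((j:ℝ) + 1) * ((j:ℝ) + 2)))) :
    (∃ C > (0:ℝ), ∃ Rb ∈ Ioo (0:ℝ) (min (a ^ α) 1), ∀ R ∈ Ioo (0:ℝ) Rb,
      |G R - 2 / (Real.pi * b) * R ^ (2 * b) * Real.log (1 / R)| ≤ C * R ^ (2 * b)) ∧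
    (∀ ε > (0:ℝ), ∃ Rb' > (0:ℝ), ∀ R ∈ Ioo (0:ℝ) Rb',
      G R ≥ (1 - ε) * (2 / (Real.pi * b)) * R ^ (2 * b) * Real.log (1 / R)) := by
  have hb0 : 0 < b := by rw [hb]; positivity
  have hA : 0 < a ^ α := rpow_pos_of_pos ha α
  have hρ : 0 < min (a ^ α) 1 := lt_min hA one_pos
  have hbound : ∀ R ∈ Ioo 0 (min (a ^ α) 1),
      |G R - 2 / (π * b) * R ^ (2 * b) * log (1 / R)|
        ≤ 2 / (π * b) * (|log (a ^ α)| + 1 / (2 * b) + α / 2) * R ^ (2 * b) := fun R hR => by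
    rw [hG R]
    exact abs_balayageMass_sub_le hα0.le hA hb0 hR.1 (hR.2.le.trans (min_le_left _ _))
  refine ⟨⟨_, by positivity, min (a ^ α) 1 / 2, ⟨half_pos hρ, half_lt_self hρ⟩,
    fun R hR => hbound R ⟨hR.1, hR.2.trans (half_lt_self hρ)⟩⟩,
    fun ε hε => exists_forall_ge_one_sub_mul_of_abs_sub_le (by positivity) hρ hε hbound⟩

/-- for `0 < α ≤ 2`, `b := 1/(2α)` and `a > 0`, the explicit balayage
mass `G(R)` of the sector at the critical exponent satisfies
`|G(R) − (2/(πb)) R^{2b} log(1/R)| ≤ C R^{2b}` for small `R`; in particular for every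
`ε > 0`, `G(R) ≥ (1−ε)(2/(πb)) R^{2b} log(1/R)` for all small `R`. The sum
`∑_{j≥1} α r^{2b−1}(1−(r/a^α)^{2j/α})/(j(j+1))` is indexed by `j+1`, `j : ℕ`. -/
theorem stmt_11 (α a b : ℝ) (hα0 : 0 < α) (hα2 : α ≤ 2) (ha : 0 < a)
    (hb : b = 1 / (2 * α)) (G : ℝ → ℝ)
    (hG : ∀ R : ℝ, G R = 2 * ∫ r in (0:ℝ)..R, (1 / Real.pi) *
      (2 * r ^ (2 * b - 1) * Real.log (a ^ α / r) +
        ∑' j : ℕ, α * r ^ (2 * b - 1) * (1 - (r / a ^ α) ^ (2 * ((j:ℝ) + 1) / α)) /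
          (((j:ℝ) + 1) * ((j:ℝ) + 2)))) :
    (∃ C > (0:ℝ), ∃ Rb ∈ Ioo (0:ℝ) (min (a ^ α) 1), ∀ R ∈ Ioo (0:ℝ) Rb,
      |G R - 2 / (Real.pi * b) * R ^ (2 * b) * Real.log (1 / R)| ≤ C * R ^ (2 * b)) ∧
    (∀ ε > (0:ℝ), ∃ Rb' > (0:ℝ), ∀ R ∈ Ioo (0:ℝ) Rb',
      G R ≥ (1 - ε) * (2 / (Real.pi * b)) * R ^ (2 * b) * Real.log (1 / R)) :=
  stmt_11_general α a b hα0 ha hb G hG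
end

section
/- Let 0 < α ≤ 2, b > 0 with 2b > 1/α and 2b ∉ {(2j+1)/α : j = 0, 1, 2, ...}, and let a > 0. For 0 < R < a^α define F(R) := 2 ∫_0^R (4 a^{2αb}/(απ r)) ∑_{j=0}^∞ [ (r/a^α)^{2b} − (r/a^α)^{(2j+1)/α} ] / ( ((2j+1)/α)² − (2b)² ) dr. Then there exist constants c > 0, C > 0 and R̄ ∈ (0, a^α) such that c R^{1/α} ≤ F(R) ≤ C R^{1/α} for all R ∈ (0, R̄). -/
/-!
Write `s_j = (2j+1)/α` and `t = r/a^α`. For `0 < t ≤ 1` each term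
`(t^{2b} - t^{s_j}) / (s_j² - (2b)²)` of the series is nonnegative, since numerator and
denominator change sign together, and it is at most `t^{1/α} / |s_j² - (2b)²|` because both
powers lie in `[0, t^{1/α}]`; as `s_j ≍ j`, these majorants are summable and the series is
`O(t^{1/α})`. Conversely, since `2b > 1/α = s_0`, the `j = 0` term alone is at least
`t^{1/α} / (2((2b)² - 1/α²))` once `t^{2b - 1/α} ≤ 1/2`. The integrand of `F` is thus
comparable to `r^{1/α - 1}`, whose integral over `[0, R]` is `α R^{1/α}`.
-/

open Set MeasureTheory Filter

section RpowEstimates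

variable {t β s : ℝ}

theorem rpow_sub_rpow_div_sq_sub_sq_nonneg (ht0 : 0 < t) (ht1 : t ≤ 1) (hβ : 0 ≤ β)
    (hs : 0 ≤ s) : 0 ≤ (t ^ β - t ^ s) / (s ^ 2 - β ^ 2) := by
  rcases le_total β s with h | h
  · exact div_nonneg (sub_nonneg.2 (Real.rpow_le_rpow_of_exponent_ge ht0 ht1 h))
      (sub_nonneg.2 (pow_le_pow_left₀ hβ h 2))
  · exact div_nonneg_of_nonpos (sub_nonpos.2 (Real.rpow_le_rpow_of_exponent_ge ht0 ht1 h))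
      (sub_nonpos.2 (pow_le_pow_left₀ hs h 2))

theorem rpow_sub_rpow_div_le {m : ℝ} (ht0 : 0 < t) (ht1 : t ≤ 1) (hβ : m ≤ β) (hs : m ≤ s)
    (d : ℝ) : (t ^ β - t ^ s) / d ≤ t ^ m * (1 / |d|) := by
  have hβm := Real.rpow_le_rpow_of_exponent_ge ht0 ht1 hβ
  have hsm := Real.rpow_le_rpow_of_exponent_ge ht0 ht1 hs
  have hβ0 := Real.rpow_nonneg ht0.le β
  have hs0 := Real.rpow_nonneg ht0.le s
  calc (t ^ β - t ^ s) / d ≤ |t ^ β - t ^ s| / |d| := (le_abs_self _).trans_eq (abs_div _ _)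
    _ ≤ t ^ m / |d| := by gcongr; exact abs_sub_le_iff.2 ⟨by linarith, by linarith⟩
    _ = t ^ m * (1 / |d|) := by ring

theorem rpow_le_half_rpow {m : ℝ} (ht0 : 0 < t) (hmβ : m < β)
    (ht : t ≤ (1 / 2) ^ (β - m)⁻¹) : t ^ β ≤ t ^ m / 2 := by
  have hsmall : t ^ (β - m) ≤ 1 / 2 := by
    calc t ^ (β - m) ≤ ((1 / 2 : ℝ) ^ (β - m)⁻¹) ^ (β - m) :=
          Real.rpow_le_rpow ht0.le ht (sub_nonneg.2 hmβ.le)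
      _ = 1 / 2 := Real.rpow_inv_rpow (by norm_num) (sub_ne_zero.2 hmβ.ne')
  calc t ^ β = t ^ m * t ^ (β - m) := by rw [← Real.rpow_add ht0]; ring_nf
    _ ≤ t ^ m * (1 / 2) := by gcongr
    _ = t ^ m / 2 := by ring

end RpowEstimates

theorem summable_one_div_abs_sq_sub_sq {s : ℕ → ℝ} {c : ℝ} (hc : 0 < c)
    (hs : ∀ j, c * j ≤ s j) (β : ℝ) : Summable fun j => 1 / |s j ^ 2 - β ^ 2| := by
  refine ((Real.summable_one_div_nat_pow.2 one_lt_two).mul_left (2 / c ^ 2))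
    |>.of_norm_bounded_eventually_nat ?_
  filter_upwards [eventually_ge_atTop (⌈2 * |β| / c⌉₊ + 1)] with j hj
  have hj1 : (1 : ℝ) ≤ j := by exact_mod_cast (Nat.le_add_left 1 _).trans hj
  have hβj : 2 * |β| ≤ c * j := by
    have : 2 * |β| / c ≤ j := (Nat.le_ceil _).trans (by exact_mod_cast (Nat.le_succ _).trans hj)
    rw [div_le_iff₀ hc] at this
    linarith
  have hsj : c * j ≤ s j := hs j
  have hβsq : β ^ 2 = |β| ^ 2 := (sq_abs β).symm
  have hlower : c ^ 2 * j ^ 2 / 2 ≤ s j ^ 2 - β ^ 2 := by nlinarith [abs_nonneg β]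
  have hpos : 0 < c ^ 2 * j ^ 2 / 2 := by positivity
  rw [Real.norm_eq_abs, abs_of_nonneg (by positivity), abs_of_pos (hpos.trans_le hlower)]
  calc 1 / (s j ^ 2 - β ^ 2) ≤ 1 / (c ^ 2 * j ^ 2 / 2) := one_div_le_one_div_of_le hpos hlower
    _ = 2 / c ^ 2 * (1 / (j : ℝ) ^ 2) := by field_simp

theorem AEStronglyMeasurable.tsum_of_ae_summable {X E : Type*} [MeasurableSpace X]
    {μ : Measure X} [NormedAddCommGroup E] {f : ℕ → X → E}
    (hf : ∀ n, AEStronglyMeasurable (f n) μ) (hsum : ∀ᵐ x ∂μ, Summable fun n => f n x) :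
    AEStronglyMeasurable (fun x => ∑' n, f n x) μ :=
  aestronglyMeasurable_of_tendsto_ae atTop
    (fun _ => Finset.aestronglyMeasurable_fun_sum _ fun n _ => hf n)
    (hsum.mono fun _ hx => hx.hasSum.tendsto_sum_nat)

theorem integral_bounds_of_rpow_bounds {g : ℝ → ℝ} {q kL kU R : ℝ} (hq : 0 < q) (hR : 0 ≤ R)
    (hg : AEStronglyMeasurable g (volume.restrict (Ioc 0 R)))
    (hbounds : ∀ r ∈ Ioc 0 R, kL * r ^ (q - 1) ≤ g r ∧ g r ≤ kU * r ^ (q - 1)) :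
    kL * (R ^ q / q) ≤ ∫ r in (0 : ℝ)..R, g r ∧ ∫ r in (0 : ℝ)..R, g r ≤ kU * (R ^ q / q) := by
  have hpow : IntegrableOn (fun r : ℝ => r ^ (q - 1)) (Ioc 0 R) :=
    (intervalIntegrable_iff_integrableOn_Ioc_of_le hR).1
      (intervalIntegral.intervalIntegrable_rpow' (by linarith))
  have hpow_integral : ∫ r in Ioc (0 : ℝ) R, r ^ (q - 1) = R ^ q / q := by
    rw [← intervalIntegral.integral_of_le hR, integral_rpow (Or.inl (by linarith)),
      sub_add_cancel, Real.zero_rpow hq.ne', sub_zero]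
  have hg_int : IntegrableOn g (Ioc 0 R) := by
    refine (hpow.const_mul (|kL| + |kU|)).mono' hg ?_
    filter_upwards [ae_restrict_mem measurableSet_Ioc] with r hr
    have hr0 : 0 ≤ r ^ (q - 1) := Real.rpow_nonneg hr.1.le _
    obtain ⟨hl, hu⟩ := hbounds r hr
    rw [Real.norm_eq_abs]
    refine abs_le.2 ⟨?_, ?_⟩ <;>
      nlinarith [neg_abs_le kL, le_abs_self kU, abs_nonneg kL, abs_nonneg kU]
  rw [intervalIntegral.integral_of_le hR, ← hpow_integral, ← integral_const_mul,
    ← integral_const_mul]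
  exact ⟨setIntegral_mono_on (hpow.const_mul kL) hg_int measurableSet_Ioc
      fun r hr => (hbounds r hr).1,
    setIntegral_mono_on hg_int (hpow.const_mul kU) measurableSet_Ioc
      fun r hr => (hbounds r hr).2⟩

theorem div_mul_mul_div_rpow {c k r A q : ℝ} (hr : 0 < r) (hA : 0 ≤ A) :
    c / r * (k * (r / A) ^ q) = c * k / A ^ q * r ^ (q - 1) := by
  rw [Real.div_rpow hr.le hA, Real.rpow_sub_one hr.ne']
  ring

theorem rpow_bounds_div_mul_comp_div {φ : ℝ → ℝ} {c cL cU q t₀ A R : ℝ} (hc : 0 ≤ c)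
    (hA : 0 < A) (hR : R < t₀ * A)
    (hφ : ∀ t ∈ Ioo 0 t₀, cL * t ^ q ≤ φ t ∧ φ t ≤ cU * t ^ q) :
    ∀ r ∈ Ioc 0 R, c * cL / A ^ q * r ^ (q - 1) ≤ c / r * φ (r / A) ∧
      c / r * φ (r / A) ≤ c * cU / A ^ q * r ^ (q - 1) := by
  rintro r ⟨hr0, hrR⟩
  obtain ⟨hl, hu⟩ := hφ (r / A) ⟨by positivity, by rw [div_lt_iff₀ hA]; linarith⟩
  rw [← div_mul_mul_div_rpow hr0 hA.le, ← div_mul_mul_div_rpow hr0 hA.le]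
  exact ⟨by gcongr, by gcongr⟩

/-- The `j`-th term of the series in `F`, at `t = r / a^α` and with `β = 2b`. -/
noncomputable def sectorTerm (α β t : ℝ) (j : ℕ) : ℝ :=
  (t ^ β - t ^ ((2 * (j : ℝ) + 1) / α)) / (((2 * (j : ℝ) + 1) / α) ^ 2 - β ^ 2)

noncomputable def sectorSeries (α β t : ℝ) : ℝ := ∑' j, sectorTerm α β t j

namespace sectorTerm

variable {α β t : ℝ}

theorem measurable (α β : ℝ) (j : ℕ) : Measurable fun t => sectorTerm α β t j := by
  unfold sectorTerm
  fun_prop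

theorem nonneg (hα : 0 < α) (hβ : 0 ≤ β) (ht0 : 0 < t) (ht1 : t ≤ 1) (j : ℕ) :
    0 ≤ sectorTerm α β t j :=
  rpow_sub_rpow_div_sq_sub_sq_nonneg ht0 ht1 hβ (by positivity)

theorem one_div_le_exponent (hα : 0 < α) (j : ℕ) : 1 / α ≤ (2 * (j : ℝ) + 1) / α := by
  gcongr
  linarith [j.cast_nonneg (α := ℝ)]

theorem le_rpow_mul (hα : 0 < α) (hβ : 1 / α ≤ β) (ht0 : 0 < t) (ht1 : t ≤ 1) (j : ℕ) :
    sectorTerm α β t j ≤ t ^ (1 / α) * (1 / |((2 * (j : ℝ) + 1) / α) ^ 2 - β ^ 2|) :=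
  rpow_sub_rpow_div_le ht0 ht1 hβ (one_div_le_exponent hα j) _

theorem zero (α β t : ℝ) : sectorTerm α β t 0 = (t ^ (1 / α) - t ^ β) / (β ^ 2 - (1 / α) ^ 2) := by
  simp only [sectorTerm, Nat.cast_zero, mul_zero, zero_add]
  rw [← neg_sub (t ^ (1 / α)), ← neg_sub (β ^ 2), neg_div_neg_eq]

theorem summable_one_div_abs_denom (hα : 0 < α) (β : ℝ) :
    Summable fun j : ℕ => 1 / |((2 * (j : ℝ) + 1) / α) ^ 2 - β ^ 2| :=
  _root_.summable_one_div_abs_sq_sub_sq (c := 1 / α) (by positivity)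
    (fun j => by rw [one_div_mul_eq_div]; gcongr; linarith) β

theorem summable (hα : 0 < α) (hβ : 1 / α ≤ β) (ht0 : 0 < t) (ht1 : t ≤ 1) :
    Summable (sectorTerm α β t) :=
  ((summable_one_div_abs_denom hα β).mul_left _).of_nonneg_of_le
    (nonneg hα ((by positivity : (0 : ℝ) ≤ 1 / α).trans hβ) ht0 ht1) (le_rpow_mul hα hβ ht0 ht1)

end sectorTerm

theorem aestronglyMeasurable_sectorSeries_div {α β A R : ℝ} (hα : 0 < α) (hβ : 1 / α ≤ β)
    (hA : 0 < A) (hRA : R ≤ A) :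
    AEStronglyMeasurable (fun r => sectorSeries α β (r / A)) (volume.restrict (Ioc 0 R)) :=
  AEStronglyMeasurable.tsum_of_ae_summable
    (fun j => ((sectorTerm.measurable α β j).comp (measurable_id.div_const A)).aestronglyMeasurable)
    ((ae_restrict_mem measurableSet_Ioc).mono fun _ hr =>
      sectorTerm.summable hα hβ (div_pos hr.1 hA) ((div_le_one hA).2 (hr.2.trans hRA)))

theorem exists_sectorSeries_bounds {α β : ℝ} (hα : 0 < α) (hβ : 1 / α < β) :
    ∃ cL > (0 : ℝ), ∃ cU > (0 : ℝ), ∃ t₀ ∈ Ioo (0 : ℝ) 1, ∀ t ∈ Ioo (0 : ℝ) t₀,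
      cL * t ^ (1 / α) ≤ sectorSeries α β t ∧ sectorSeries α β t ≤ cU * t ^ (1 / α) := by
  set U := ∑' j : ℕ, 1 / |((2 * (j : ℝ) + 1) / α) ^ 2 - β ^ 2|
  have hU : 0 ≤ U := tsum_nonneg fun j => by positivity
  have hD : 0 < β ^ 2 - (1 / α) ^ 2 := by
    nlinarith [(by positivity : (0 : ℝ) < 1 / α)]
  have he : 0 < β - 1 / α := sub_pos.2 hβ
  refine ⟨1 / (2 * (β ^ 2 - (1 / α) ^ 2)), by positivity, U + 1, by positivity,
    (1 / 2) ^ (β - 1 / α)⁻¹, ⟨by positivity, Real.rpow_lt_one (by norm_num) (by norm_num)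
      (by positivity)⟩, ?_⟩
  rintro t ⟨ht0, htt₀⟩
  have ht1 : t ≤ 1 := htt₀.le.trans
    (Real.rpow_le_one (by norm_num) (by norm_num) (by positivity))
  have hβ0 : 0 ≤ β := (by positivity : (0 : ℝ) ≤ 1 / α).trans hβ.le
  have hsum := sectorTerm.summable hα hβ.le ht0 ht1
  have htpow : 0 ≤ t ^ (1 / α) := Real.rpow_nonneg ht0.le _
  constructor
  · have hhalf := rpow_le_half_rpow ht0 hβ htt₀.le
    calc 1 / (2 * (β ^ 2 - (1 / α) ^ 2)) * t ^ (1 / α)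
        = t ^ (1 / α) / 2 / (β ^ 2 - (1 / α) ^ 2) := by field_simp
      _ ≤ (t ^ (1 / α) - t ^ β) / (β ^ 2 - (1 / α) ^ 2) := by gcongr; linarith
      _ = sectorTerm α β t 0 := (sectorTerm.zero α β t).symm
      _ ≤ sectorSeries α β t :=
        hsum.le_tsum 0 fun j _ => sectorTerm.nonneg hα hβ0 ht0 ht1 j
  · calc sectorSeries α β t ≤ ∑' j : ℕ,
          t ^ (1 / α) * (1 / |((2 * (j : ℝ) + 1) / α) ^ 2 - β ^ 2|) :=
        hsum.tsum_le_tsum (sectorTerm.le_rpow_mul hα hβ.le ht0 ht1)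
          ((sectorTerm.summable_one_div_abs_denom hα β).mul_left _)
      _ = U * t ^ (1 / α) := by rw [tsum_mul_left, mul_comm]
      _ ≤ (U + 1) * t ^ (1 / α) := by nlinarith

theorem stmt_12_general (α b a : ℝ) (hα0 : 0 < α) (h2b : 2 * b > 1 / α)
    (ha : 0 < a) (F : ℝ → ℝ)
    (hF : ∀ R : ℝ, F R = 2 * ∫ r in (0:ℝ)..R,
      (4 * a ^ (2 * α * b) / (α * Real.pi * r)) *
        ∑' j : ℕ, ((r / a ^ α) ^ (2 * b) - (r / a ^ α) ^ ((2 * (j:ℝ) + 1) / α)) /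
          (((2 * (j:ℝ) + 1) / α) ^ 2 - (2 * b) ^ 2)) :
    ∃ c > (0:ℝ), ∃ C > (0:ℝ), ∃ Rb ∈ Ioo (0:ℝ) (a ^ α), ∀ R ∈ Ioo (0:ℝ) Rb,
      c * R ^ (1 / α) ≤ F R ∧ F R ≤ C * R ^ (1 / α) := by
  obtain ⟨cL, hcL, cU, hcU, t₀, ⟨ht₀0, ht₀1⟩, hseries⟩ := exists_sectorSeries_bounds hα0 h2b
  set A := a ^ α
  have hA : 0 < A := Real.rpow_pos_of_pos ha α
  set c₀ := 4 * a ^ (2 * α * b) / (α * Real.pi)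
  have hc₀ : 0 < c₀ := by positivity
  refine ⟨2 * α * (c₀ * cL / A ^ (1 / α)), by positivity, 2 * α * (c₀ * cU / A ^ (1 / α)),
    by positivity, t₀ * A, ⟨by positivity, mul_lt_of_lt_one_left hA ht₀1⟩, ?_⟩
  rintro R ⟨hR0, hRt₀⟩
  obtain ⟨hl, hu⟩ := integral_bounds_of_rpow_bounds
    (g := fun r => c₀ / r * sectorSeries α (2 * b) (r / A)) (by positivity) hR0.le
    ((measurable_const.div measurable_id).aestronglyMeasurable.mul
      (aestronglyMeasurable_sectorSeries_div hα0 h2b.le hA (by nlinarith)))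
    (rpow_bounds_div_mul_comp_div hc₀.le hA hRt₀ hseries)
  have hFR : F R = 2 * ∫ r in (0 : ℝ)..R, c₀ / r * sectorSeries α (2 * b) (r / A) := by
    rw [hF R]
    congr 2
    funext r
    rw [div_div]
    rfl
  have hαR : R ^ (1 / α) / (1 / α) = α * R ^ (1 / α) := by field_simp
  rw [hαR] at hl hu
  rw [hFR]
  exact ⟨by linarith, by linarith⟩

/-- for `0 < α ≤ 2`, `b > 0` with `2b > 1/α` and `2b ≠ (2j+1)/α` for all
`j : ℕ`, and `a > 0`, the explicit balayage mass `F(R)` of the sector satisfies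
`c R^{1/α} ≤ F(R) ≤ C R^{1/α}` for all small `R`. -/
theorem stmt_12 (α b a : ℝ) (hα0 : 0 < α) (hα2 : α ≤ 2) (hb : 0 < b) (h2b : 2 * b > 1 / α)
    (hbj : ∀ j : ℕ, 2 * b ≠ (2 * (j:ℝ) + 1) / α) (ha : 0 < a) (F : ℝ → ℝ)
    (hF : ∀ R : ℝ, F R = 2 * ∫ r in (0:ℝ)..R,
      (4 * a ^ (2 * α * b) / (α * Real.pi * r)) *
        ∑' j : ℕ, ((r / a ^ α) ^ (2 * b) - (r / a ^ α) ^ ((2 * (j:ℝ) + 1) / α)) /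
          (((2 * (j:ℝ) + 1) / α) ^ 2 - (2 * b) ^ 2)) :
    ∃ c > (0:ℝ), ∃ C > (0:ℝ), ∃ Rb ∈ Ioo (0:ℝ) (a ^ α), ∀ R ∈ Ioo (0:ℝ) Rb,
      c * R ^ (1 / α) ≤ F R ∧ F R ≤ C * R ^ (1 / α) :=
  stmt_12_general α b a hα0 h2b ha F hF
end

section
/- Let α ∈ (0, 2], γ ∈ (0, 1], r₁ > 0, K ≥ 0, and let w : [0, r₁] → ℂ be continuous with w(0) = 0, differentiable on (0, r₁), and satisfying |w'(r) − 1| ≤ K r^γ for all r ∈ (0, r₁). Then: (i) |w(r) − r| ≤ (K/(1+γ)) r^{1+γ} for all r ∈ [0, r₁]; and (ii) there exist r₂ ∈ (0, r₁] and K' ≥ 0 such that Re w(r) > 0 for r ∈ (0, r₂), the function φ(r) := w(r)^{1/α} (principal complex power) is differentiable on (0, r₂) with φ'(r) = (1/α) w(r)^{1/α − 1} w'(r), and |φ'(r) − (1/α) r^{1/α − 1}| ≤ K' r^{1/α − 1 + γ} for all r ∈ (0, r₂). -/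
/-!
For (i), the derivative of `w(r) - r` is at most `K r^γ`. Pairing with a norming functional
reduces the mean value inequality to the monotonicity of a real function on `[0, r]`, which
needs differentiability only in the interior, where the hypothesis is available.

For (ii), part (i) puts `w(r)` in the disc of radius `r/2` about `r` once `r` is small. On that
disc `z ↦ z^c` is holomorphic with `|z^c| ≤ 2^|c| r^c` and `|(z^c)'| ≤ |c| 2^|c-1| r^(c-1)`, so
splitting `w^c w' - r^c = w^c (w' - 1) + (w^c - r^c)` bounds both terms by a multiple of
`r^(c+γ)`, where `c = 1/α - 1`.
-/

open Set Filter Topology Metric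

theorem rpow_le_two_rpow_abs_mul_rpow {r x : ℝ} (t : ℝ) (hr : 0 < r) (h₁ : r / 2 ≤ x)
    (h₂ : x ≤ 2 * r) : x ^ t ≤ 2 ^ |t| * r ^ t := by
  rcases le_or_gt 0 t with ht | ht
  · calc x ^ t ≤ (2 * r) ^ t := Real.rpow_le_rpow (by linarith) h₂ ht
      _ = 2 ^ |t| * r ^ t := by rw [abs_of_nonneg ht, Real.mul_rpow zero_le_two hr.le]
  · calc x ^ t ≤ (r / 2) ^ t := Real.rpow_le_rpow_of_nonpos (by positivity) h₁ ht.le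
      _ = 2 ^ |t| * r ^ t := by
          rw [abs_of_neg ht, Real.div_rpow hr.le zero_le_two, Real.rpow_neg zero_le_two]
          ring

theorem norm_le_of_norm_deriv_le_mul_rpow {E : Type*} [NormedAddCommGroup E] [NormedSpace ℝ E]
    {f f' : ℝ → E} {b K γ : ℝ} (hγ : 0 < γ) (hb : 0 ≤ b) (hf : ContinuousOn f (Icc 0 b))
    (hf0 : f 0 = 0) (hderiv : ∀ x ∈ Ioo 0 b, HasDerivAt f (f' x) x)
    (hbound : ∀ x ∈ Ioo 0 b, ‖f' x‖ ≤ K * x ^ γ) :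
    ‖f b‖ ≤ K / (1 + γ) * b ^ (1 + γ) := by
  obtain ⟨g, hg1, hgb⟩ := exists_dual_vector'' ℝ (f b)
  set B : ℝ → ℝ := fun x => K / (1 + γ) * x ^ (1 + γ) - g (f x)
  have hB_mono : MonotoneOn B (Icc 0 b) := by
    refine monotoneOn_of_hasDerivWithinAt_nonneg (convex_Icc 0 b)
      ((continuousOn_const.mul
        (Real.continuous_rpow_const (q := 1 + γ) (by linarith)).continuousOn).sub
        (g.continuous.comp_continuousOn hf))
      (f' := fun x => K * x ^ γ - g (f' x)) (fun x hx => ?_) (fun x hx => ?_)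
    · rw [interior_Icc] at hx
      have hpow := (Real.hasDerivAt_rpow_const (p := 1 + γ) (Or.inr (by linarith))).const_mul
        (K / (1 + γ)) (x := x)
      have hpow_deriv : K / (1 + γ) * ((1 + γ) * x ^ (1 + γ - 1)) = K * x ^ γ := by
        rw [add_sub_cancel_left]; field_simp
      rw [hpow_deriv] at hpow
      exact (hpow.sub ((g.hasFDerivAt).comp_hasDerivAt x (hderiv x hx))).hasDerivWithinAt
    · rw [interior_Icc] at hx
      have hg : g (f' x) ≤ ‖f' x‖ := (le_abs_self _).trans
        ((g.le_opNorm (f' x)).trans (mul_le_of_le_one_left (norm_nonneg _) hg1))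
      linarith [hbound x hx]
  have hB := hB_mono ⟨le_rfl, hb⟩ ⟨hb, le_rfl⟩ hb
  simp only [B, hf0, map_zero, Real.zero_rpow (by linarith : (1 + γ) ≠ 0), hgb,
    RCLike.ofReal_real_eq_id, id_eq] at hB
  linarith

section closedBall

variable {r : ℝ} {z : ℂ}

theorem half_le_re_of_mem_closedBall_ofReal (hz : z ∈ closedBall (r : ℂ) (r / 2)) :
    r / 2 ≤ z.re := by
  have h := (Complex.abs_re_le_norm (z - r)).trans (mem_closedBall_iff_norm.1 hz)
  rw [Complex.sub_re, Complex.ofReal_re] at h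
  linarith [(abs_le.1 h).1]

theorem norm_le_two_mul_of_mem_closedBall_ofReal (hr : 0 ≤ r)
    (hz : z ∈ closedBall (r : ℂ) (r / 2)) : ‖z‖ ≤ 2 * r := by
  have h := norm_le_norm_add_norm_sub' z (r : ℂ)
  rw [Complex.norm_of_nonneg hr] at h
  linarith [mem_closedBall_iff_norm.1 hz]

theorem re_pos_of_mem_closedBall_ofReal (hr : 0 < r) (hz : z ∈ closedBall (r : ℂ) (r / 2)) :
    0 < z.re :=
  (half_pos hr).trans_le (half_le_re_of_mem_closedBall_ofReal hz)

theorem mem_slitPlane_of_mem_closedBall_ofReal (hr : 0 < r)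
    (hz : z ∈ closedBall (r : ℂ) (r / 2)) : z ∈ Complex.slitPlane :=
  Complex.mem_slitPlane_iff.2 (Or.inl (re_pos_of_mem_closedBall_ofReal hr hz))

theorem norm_cpow_le_of_mem_closedBall_ofReal (c : ℝ) (hr : 0 < r)
    (hz : z ∈ closedBall (r : ℂ) (r / 2)) : ‖z ^ (c : ℂ)‖ ≤ 2 ^ |c| * r ^ c := by
  rw [Complex.norm_cpow_real]
  exact rpow_le_two_rpow_abs_mul_rpow c hr
    ((half_le_re_of_mem_closedBall_ofReal hz).trans (Complex.re_le_norm z))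
    (norm_le_two_mul_of_mem_closedBall_ofReal hr.le hz)

theorem norm_cpow_sub_cpow_le_of_mem_closedBall_ofReal (c : ℝ) (hr : 0 < r)
    (hz : z ∈ closedBall (r : ℂ) (r / 2)) :
    ‖z ^ (c : ℂ) - (r : ℂ) ^ (c : ℂ)‖ ≤ |c| * 2 ^ |c - 1| * r ^ (c - 1) * ‖z - r‖ := by
  refine (convex_closedBall _ _).norm_image_sub_le_of_norm_hasDerivWithin_le
    (fun p hp => (Complex.hasStrictDerivAt_cpow_const
      (mem_slitPlane_of_mem_closedBall_ofReal hr hp)).hasDerivAt.hasDerivWithinAt)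
    (fun p hp => ?_) (mem_closedBall_self (by positivity)) hz
  rw [norm_mul, Complex.norm_real, Real.norm_eq_abs, mul_assoc,
    show (c : ℂ) - 1 = ((c - 1 : ℝ) : ℂ) by push_cast; ring]
  exact mul_le_mul_of_nonneg_left (norm_cpow_le_of_mem_closedBall_ofReal _ hr hp) (abs_nonneg c)

end closedBall

theorem mem_closedBall_ofReal_of_norm_sub_le_mul_rpow {γ r C : ℝ} {z : ℂ} (hr : 0 < r)
    (hz : ‖z - r‖ ≤ C * r ^ (1 + γ)) (hC : C * r ^ γ ≤ 1 / 2) :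
    z ∈ closedBall (r : ℂ) (r / 2) := by
  rw [mem_closedBall_iff_norm]
  calc ‖z - r‖ ≤ C * r ^ γ * r := hz.trans_eq (by rw [Real.rpow_add hr, Real.rpow_one]; ring)
    _ ≤ 1 / 2 * r := by gcongr
    _ = r / 2 := by ring

theorem norm_cpow_mul_sub_rpow_le {c γ r K C : ℝ} {z u : ℂ} (hr : 0 < r)
    (hz : ‖z - r‖ ≤ C * r ^ (1 + γ)) (hC : C * r ^ γ ≤ 1 / 2) (hu : ‖u - 1‖ ≤ K * r ^ γ) :
    ‖z ^ (c : ℂ) * u - (r : ℂ) ^ (c : ℂ)‖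
      ≤ (2 ^ |c| * K + |c| * 2 ^ |c - 1| * C) * r ^ (c + γ) := by
  have hrpow : r ^ (1 + γ) = r * r ^ γ := by rw [Real.rpow_add hr, Real.rpow_one]
  have hball := mem_closedBall_ofReal_of_norm_sub_le_mul_rpow hr hz hC
  calc ‖z ^ (c : ℂ) * u - (r : ℂ) ^ (c : ℂ)‖
      = ‖z ^ (c : ℂ) * (u - 1) + (z ^ (c : ℂ) - (r : ℂ) ^ (c : ℂ))‖ := by ring_nf
    _ ≤ ‖z ^ (c : ℂ)‖ * ‖u - 1‖ + ‖z ^ (c : ℂ) - (r : ℂ) ^ (c : ℂ)‖ :=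
        (norm_add_le _ _).trans_eq (by rw [norm_mul])
    _ ≤ 2 ^ |c| * r ^ c * (K * r ^ γ)
          + |c| * 2 ^ |c - 1| * r ^ (c - 1) * (C * r ^ (1 + γ)) := by
        gcongr
        · exact norm_cpow_le_of_mem_closedBall_ofReal c hr hball
        · exact (norm_cpow_sub_cpow_le_of_mem_closedBall_ofReal c hr hball).trans
            (by gcongr)
    _ = (2 ^ |c| * K + |c| * 2 ^ |c - 1| * C) * r ^ (c + γ) := by
        rw [hrpow, Real.rpow_add hr, Real.rpow_sub_one hr.ne']
        field_simp

theorem norm_ofReal_mul_cpow_mul_sub_rpow_le {a c γ r K C : ℝ} {z u : ℂ} (ha : 0 ≤ a)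
    (hr : 0 < r) (hz : ‖z - r‖ ≤ C * r ^ (1 + γ)) (hC : C * r ^ γ ≤ 1 / 2)
    (hu : ‖u - 1‖ ≤ K * r ^ γ) :
    ‖(a : ℂ) * z ^ (c : ℂ) * u - ((a * r ^ c : ℝ) : ℂ)‖
      ≤ a * (2 ^ |c| * K + |c| * 2 ^ |c - 1| * C) * r ^ (c + γ) := by
  have hfactor : (a : ℂ) * z ^ (c : ℂ) * u - ((a * r ^ c : ℝ) : ℂ)
      = a * (z ^ (c : ℂ) * u - (r : ℂ) ^ (c : ℂ)) := by
    rw [Complex.ofReal_mul, Complex.ofReal_cpow hr.le]; ring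
  rw [hfactor, norm_mul, Complex.norm_of_nonneg ha, mul_assoc]
  exact mul_le_mul_of_nonneg_left (norm_cpow_mul_sub_rpow_le hr hz hC hu) ha

theorem exists_forall_mul_rpow_le {γ : ℝ} (hγ : 0 < γ) (C : ℝ) {ε : ℝ} (hε : 0 < ε) :
    ∃ δ > 0, ∀ r ∈ Ioo 0 δ, C * r ^ γ ≤ ε := by
  have hlim : Tendsto (fun r : ℝ => C * r ^ γ) (𝓝 0) (𝓝 0) := by
    simpa [Real.zero_rpow hγ.ne'] using
      ((Real.continuous_rpow_const hγ.le).tendsto 0).const_mul C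
  obtain ⟨δ, hδ, hsub⟩ := mem_nhdsGT_iff_exists_Ioo_subset.1
    (nhdsWithin_le_nhds (hlim.eventually (eventually_le_nhds hε)))
  exact ⟨δ, hδ, fun r hr => hsub hr⟩

/-- if `w : [0, r₁] → ℂ` is continuous with `w 0 = 0`, differentiable on
`(0, r₁)` with `|w'(r) − 1| ≤ K r^γ`, then (i) `|w(r) − r| ≤ (K/(1+γ)) r^{1+γ}`, and
(ii) near `0` one has `Re w(r) > 0`, the function `φ(r) = w(r)^{1/α}` (principal
complex power) has derivative `φ'(r) = (1/α) w(r)^{1/α−1} w'(r)` and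
`|φ'(r) − (1/α) r^{1/α−1}| ≤ K' r^{1/α−1+γ}`. -/
theorem stmt_13 (α γ r₁ K : ℝ) (hα : α ∈ Ioc (0:ℝ) 2) (hγ : γ ∈ Ioc (0:ℝ) 1)
    (hr₁ : 0 < r₁) (hK : 0 ≤ K) (w w' : ℝ → ℂ)
    (hwc : ContinuousOn w (Icc 0 r₁)) (hw0 : w 0 = 0)
    (hwd : ∀ r ∈ Ioo (0:ℝ) r₁, HasDerivAt w (w' r) r)
    (hw' : ∀ r ∈ Ioo (0:ℝ) r₁, ‖w' r - 1‖ ≤ K * r ^ γ) :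
    (∀ r ∈ Icc (0:ℝ) r₁, ‖w r - (r : ℂ)‖ ≤ K / (1 + γ) * r ^ (1 + γ)) ∧
    ∃ r₂ ∈ Ioc (0:ℝ) r₁, ∃ K' ≥ (0:ℝ), ∀ r ∈ Ioo (0:ℝ) r₂,
      0 < (w r).re ∧
      HasDerivAt (fun s : ℝ => w s ^ (1 / (α:ℂ)))
        ((1 / (α:ℂ)) * w r ^ (1 / (α:ℂ) - 1) * w' r) r ∧
      ‖(1 / (α:ℂ)) * w r ^ (1 / (α:ℂ) - 1) * w' r - ((1 / α * r ^ (1 / α - 1) : ℝ) : ℂ)‖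
        ≤ K' * r ^ (1 / α - 1 + γ) := by
  have hi : ∀ r ∈ Icc (0:ℝ) r₁, ‖w r - (r : ℂ)‖ ≤ K / (1 + γ) * r ^ (1 + γ) :=
    fun r hr => norm_le_of_norm_deriv_le_mul_rpow (f := fun s => w s - (s : ℂ)) hγ.1 hr.1
      ((hwc.mono (Icc_subset_Icc_right hr.2)).sub Complex.continuous_ofReal.continuousOn)
      (by simp [hw0])
      (fun s hs => (hwd s ⟨hs.1, hs.2.trans_le hr.2⟩).sub Complex.ofRealCLM.hasDerivAt)
      (fun s hs => hw' s ⟨hs.1, hs.2.trans_le hr.2⟩)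
  refine ⟨hi, ?_⟩
  set C := K / (1 + γ)
  set c := 1 / α - 1
  have hα₀ : 0 ≤ 1 / α := one_div_nonneg.2 hα.1.le
  have hC₀ : 0 ≤ C := div_nonneg hK (by linarith [hγ.1])
  obtain ⟨δ, hδ, hsmall⟩ := exists_forall_mul_rpow_le hγ.1 C one_half_pos
  refine ⟨min r₁ δ, ⟨lt_min hr₁ hδ, min_le_left _ _⟩,
    1 / α * (2 ^ |c| * K + |c| * 2 ^ |c - 1| * C), by positivity, ?_⟩
  rintro r ⟨hr, hrδ⟩
  have hrr₁ : r ∈ Ioo 0 r₁ := ⟨hr, hrδ.trans_le (min_le_left _ _)⟩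
  have hCr : C * r ^ γ ≤ 1 / 2 := hsmall r ⟨hr, hrδ.trans_le (min_le_right _ _)⟩
  have hwr := hi r ⟨hr.le, hrr₁.2.le⟩
  have hball := mem_closedBall_ofReal_of_norm_sub_le_mul_rpow hr hwr hCr
  refine ⟨re_pos_of_mem_closedBall_ofReal hr hball,
    (Complex.hasStrictDerivAt_cpow_const
      (mem_slitPlane_of_mem_closedBall_ofReal hr hball)).hasDerivAt.comp r (hwd r hrr₁), ?_⟩
  exact_mod_cast norm_ofReal_mul_cpow_mul_sub_rpow_le (c := c) hα₀ hr hwr hCr (hw' r hrr₁)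
end

section
/- Let α ∈ (0, 2], γ ∈ (0, 1], r₁ ∈ (0, 1], K ≥ 0, and let w : [0, r₁] → ℂ be continuous with w(0) = 0, differentiable on (0, r₁), and satisfying |w'(r) − 1| ≤ K r^γ for all r ∈ (0, r₁). Define h(r) := w(r^α)^{1/α} (principal complex power) for r ∈ (0, r₁^{1/α}). Then there exist r₃ ∈ (0, r₁^{1/α}] and K'' ≥ 0 such that h is differentiable on (0, r₃) and for all r ∈ (0, r₃): |h(r) − r| ≤ K'' r^{1+αγ} and |h'(r) − 1| ≤ K'' r^{αγ}. -/
/-!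
Put `s = r^α` and `u = w(s)/s`. The mean value inequality for `t ↦ w(t) - t` gives
`|u - 1| ≤ K s^γ = K r^{αγ}`, which is small near `0`. Since `h(r) = r u^{1/α}` and, by the
chain rule, `h'(r) = u^{1/α - 1} w'(s)`, both estimates reduce to
`|u^e v - 1| = O(|u - 1| + |v - 1|)` for `u, v` near `1`, a consequence of
`|log u| ≤ (3/2)|u - 1|` and `|exp z - 1| ≤ 2|z|`.
-/

open Set Filter Topology

namespace Complex

theorem norm_cpow_sub_one_le {u e : ℂ} (hu : ‖u - 1‖ ≤ 1 / 2)
    (he : ‖e‖ * ‖u - 1‖ ≤ 2 / 3) : ‖u ^ e - 1‖ ≤ 3 * ‖e‖ * ‖u - 1‖ := by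
  have hu0 : u ≠ 0 := by
    rintro rfl
    norm_num at hu
  have hlog : ‖log u‖ ≤ 3 / 2 * ‖u - 1‖ := by
    simpa using norm_log_one_add_half_le_self hu
  have hlog_e : ‖log u * e‖ ≤ 3 / 2 * ‖u - 1‖ * ‖e‖ := by
    rw [norm_mul]
    exact mul_le_mul_of_nonneg_right hlog (norm_nonneg e)
  rw [cpow_def_of_ne_zero hu0]
  calc ‖exp (log u * e) - 1‖ ≤ 2 * ‖log u * e‖ :=
        norm_exp_sub_one_le (by linarith)
    _ ≤ 3 * ‖e‖ * ‖u - 1‖ := by linarith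

theorem norm_cpow_mul_sub_one_le {u v e : ℂ} {B η : ℝ} (hu : ‖u - 1‖ ≤ η)
    (hv : ‖v - 1‖ ≤ η) (he : ‖e‖ ≤ B) (hη : 3 * (B + 1) * η ≤ 1) :
    ‖u ^ e * v - 1‖ ≤ (3 * B + 2) * η := by
  have hη0 : 0 ≤ η := (norm_nonneg _).trans hv
  have hB0 : 0 ≤ B := (norm_nonneg e).trans he
  have hue : ‖u ^ e - 1‖ ≤ 3 * B * η := by
    have heη : ‖e‖ * ‖u - 1‖ ≤ B * η :=
      mul_le_mul he hu (norm_nonneg _) ((norm_nonneg e).trans he)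
    refine (norm_cpow_sub_one_le (by nlinarith) (by nlinarith)).trans ?_
    linarith
  have hue_norm : ‖u ^ e‖ ≤ 2 := by
    calc ‖u ^ e‖ = ‖(u ^ e - 1) + 1‖ := by rw [sub_add_cancel]
      _ ≤ ‖u ^ e - 1‖ + 1 := by simpa using norm_add_le (u ^ e - 1) 1
      _ ≤ 2 := by nlinarith
  calc ‖u ^ e * v - 1‖ = ‖u ^ e * (v - 1) + (u ^ e - 1)‖ := by ring_nf
    _ ≤ ‖u ^ e‖ * ‖v - 1‖ + ‖u ^ e - 1‖ := by
        simpa [norm_mul] using norm_add_le (u ^ e * (v - 1)) (u ^ e - 1)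
    _ ≤ 2 * η + 3 * B * η := by gcongr
    _ = (3 * B + 2) * η := by ring

theorem ofReal_mul_cpow {s : ℝ} (hs : 0 < s) {u : ℂ} (hu : u ≠ 0) (e : ℂ) :
    ((s : ℂ) * u) ^ e = (s : ℂ) ^ e * u ^ e := by
  have hs0 : (s : ℂ) ≠ 0 := by exact_mod_cast hs.ne'
  rw [cpow_def_of_ne_zero (mul_ne_zero hs0 hu), cpow_def_of_ne_zero hs0,
    cpow_def_of_ne_zero hu, ← exp_add, log_ofReal_mul hs hu, ofReal_log hs.le, add_mul]

theorem ofReal_mul_mem_slitPlane {s : ℝ} (hs : 0 < s) {u : ℂ} (hu : u ∈ slitPlane) :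
    (s : ℂ) * u ∈ slitPlane := by
  rw [mem_slitPlane_iff] at hu ⊢
  simp only [re_ofReal_mul, im_ofReal_mul]
  rcases hu with hu | hu
  · exact Or.inl (mul_pos hs hu)
  · exact Or.inr (mul_ne_zero hs.ne' hu)

theorem ofReal_rpow_cpow {r : ℝ} (hr : 0 ≤ r) (α β : ℝ) :
    ((r ^ α : ℝ) : ℂ) ^ (β : ℂ) = ((r ^ (α * β) : ℝ) : ℂ) := by
  rw [← ofReal_cpow (Real.rpow_nonneg hr α), Real.rpow_mul hr]

end Complex

theorem norm_sub_le_of_norm_hasDerivAt_le_Ioo {E : Type*} [NormedAddCommGroup E]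
    [NormedSpace ℝ E] {f f' : ℝ → E} {a b C : ℝ} (hab : a < b)
    (hf : ContinuousOn f (Icc a b))
    (hf' : ∀ x ∈ Ioo a b, HasDerivAt f (f' x) x) (bound : ∀ x ∈ Ioo a b, ‖f' x‖ ≤ C) :
    ‖f b - f a‖ ≤ C * (b - a) := by
  have hC : 0 ≤ C := (norm_nonneg _).trans (bound ((a + b) / 2) ⟨by linarith, by linarith⟩)
  have hlip : LipschitzOnWith C.toNNReal f (Ioo a b) :=
    (convex_Ioo a b).lipschitzOnWith_of_nnnorm_hasDerivWithin_le
      (fun x hx => (hf' x hx).hasDerivWithinAt)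
      (fun x hx => by
        rw [← NNReal.coe_le_coe, coe_nnnorm, Real.coe_toNNReal C hC]
        exact bound x hx)
  rw [← closure_Ioo hab.ne] at hf
  have := (hlip.closure hf).norm_sub_le (closure_Ioo hab.ne ▸ right_mem_Icc.mpr hab.le)
    (closure_Ioo hab.ne ▸ left_mem_Icc.mpr hab.le)
  rwa [Real.coe_toNNReal C hC, Real.norm_of_nonneg (by linarith)] at this

theorem exists_Ioo_subset_of_eventually_nhdsGT {p : ℝ → Prop} {a t : ℝ}
    (hp : ∀ᶠ r in 𝓝[>] a, p r) (ht : a < t) : ∃ b ∈ Ioc a t, ∀ r ∈ Ioo a b, p r := by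
  obtain ⟨u, hu, hsub⟩ := mem_nhdsGT_iff_exists_Ioo_subset.mp hp
  exact ⟨min u t, ⟨lt_min hu ht, min_le_right u t⟩,
    fun r hr => hsub ⟨hr.1, hr.2.trans_le (min_le_left u t)⟩⟩

theorem norm_sub_ofReal_le_of_norm_deriv_sub_one_le {w w' : ℝ → ℂ} {r₁ K γ s : ℝ}
    (hγ : 0 ≤ γ) (hK : 0 ≤ K) (hwc : ContinuousOn w (Icc 0 r₁)) (hw0 : w 0 = 0)
    (hwd : ∀ r ∈ Ioo (0:ℝ) r₁, HasDerivAt w (w' r) r)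
    (hw' : ∀ r ∈ Ioo (0:ℝ) r₁, ‖w' r - 1‖ ≤ K * r ^ γ) (hs : s ∈ Ioo 0 r₁) :
    ‖w s - s‖ ≤ K * s ^ γ * s := by
  have hsub : Ioo 0 s ⊆ Ioo 0 r₁ := Ioo_subset_Ioo_right hs.2.le
  have := norm_sub_le_of_norm_hasDerivAt_le_Ioo (f := fun t : ℝ => w t - t) hs.1
    ((hwc.mono (Icc_subset_Icc_right hs.2.le)).sub Complex.continuous_ofReal.continuousOn)
    (fun t ht => (hwd t (hsub ht)).sub (Complex.ofRealCLM.hasDerivAt (x := t)))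
    (fun t ht => (hw' t (hsub ht)).trans
      (mul_le_mul_of_nonneg_left (Real.rpow_le_rpow ht.1.le ht.2.le hγ) hK))
  simpa [hw0] using this

theorem cpow_one_div_eq_mul_div_rpow {α r : ℝ} (hα : α ≠ 0) (hr : 0 < r) {z : ℂ}
    (hz : z ≠ 0) :
    z ^ (1 / (α : ℂ)) = r * (z / (r ^ α : ℝ)) ^ (1 / (α : ℂ)) := by
  have hs : (0 : ℝ) < r ^ α := Real.rpow_pos_of_pos hr α
  have hs0 : ((r ^ α : ℝ) : ℂ) ≠ 0 := by exact_mod_cast hs.ne'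
  conv_lhs => rw [← mul_div_cancel₀ z hs0]
  rw [Complex.ofReal_mul_cpow hs (div_ne_zero hz hs0),
    show 1 / (α : ℂ) = ((1 / α : ℝ) : ℂ) by push_cast; rfl,
    Complex.ofReal_rpow_cpow hr.le, mul_one_div_cancel hα, Real.rpow_one]

theorem hasDerivAt_cpow_one_div_comp_rpow {α r : ℝ} (hα : α ≠ 0) (hr : 0 < r)
    {w : ℝ → ℂ} {w' : ℂ} (hw : HasDerivAt w w' (r ^ α))
    (hu : w (r ^ α) / (r ^ α : ℝ) ∈ Complex.slitPlane) :
    HasDerivAt (fun x => w (x ^ α) ^ (1 / (α : ℂ)))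
      ((w (r ^ α) / (r ^ α : ℝ)) ^ (1 / (α : ℂ) - 1) * w') r := by
  set s : ℝ := r ^ α
  set u : ℂ := w s / s
  have hs : 0 < s := Real.rpow_pos_of_pos hr α
  have hws : w s = s * u := by
    rw [mul_div_cancel₀ _ (by exact_mod_cast hs.ne' : (s : ℂ) ≠ 0)]
  have hslit : w s ∈ Complex.slitPlane := by
    rw [hws]; exact Complex.ofReal_mul_mem_slitPlane hs hu
  have hchain :=
    (Complex.hasStrictDerivAt_cpow_const (c := 1 / (α : ℂ)) hslit).hasDerivAt.comp r
      (hw.scomp r (Real.hasDerivAt_rpow_const (p := α) (Or.inl hr.ne')))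
  refine hchain.congr_deriv ?_
  have hreal : (1 / α) * (r ^ (α * (1 / α - 1)) * (α * r ^ (α - 1))) = 1 := by
    have : α * (1 / α - 1) = -(α - 1) := by field_simp; ring
    rw [this, Real.rpow_neg hr.le]
    field_simp
  rw [hws, Complex.ofReal_mul_cpow hs (Complex.slitPlane_ne_zero hu),
    show 1 / (α : ℂ) - 1 = ((1 / α - 1 : ℝ) : ℂ) by push_cast; rfl,
    Complex.ofReal_rpow_cpow hr.le, Complex.real_smul]
  calc _ = (((1 / α) * (r ^ (α * (1 / α - 1)) * (α * r ^ (α - 1))) : ℝ) : ℂ)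
        * (u ^ ((1 / α - 1 : ℝ) : ℂ) * w') := by push_cast; ring
    _ = _ := by rw [hreal, Complex.ofReal_one, one_mul]

theorem norm_sub_le_and_hasDerivAt_cpow_one_div_comp_rpow {α r B η : ℝ} (hα : α ≠ 0)
    (hr : 0 < r) {w : ℝ → ℂ} {w' : ℂ} (hw : HasDerivAt w w' (r ^ α))
    (hws : ‖w (r ^ α) - (r ^ α : ℝ)‖ ≤ η * r ^ α) (hw' : ‖w' - 1‖ ≤ η)
    (hB : ‖1 / (α : ℂ)‖ ≤ B) (hB' : ‖1 / (α : ℂ) - 1‖ ≤ B)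
    (hη : 3 * (B + 1) * η ≤ 1) :
    ‖w (r ^ α) ^ (1 / (α : ℂ)) - r‖ ≤ (3 * B + 2) * η * r ∧
      ∃ d, HasDerivAt (fun x => w (x ^ α) ^ (1 / (α : ℂ))) d r ∧
        ‖d - 1‖ ≤ (3 * B + 2) * η := by
  set s : ℝ := r ^ α
  set u : ℂ := w s / s
  have hs : 0 < s := Real.rpow_pos_of_pos hr α
  have hs0 : (s : ℂ) ≠ 0 := by exact_mod_cast hs.ne'
  have hη0 : 0 ≤ η := (norm_nonneg _).trans hw'
  have hu : ‖u - 1‖ ≤ η := by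
    rw [show u - 1 = (w s - s) / s by rw [sub_div, div_self hs0], norm_div, Complex.norm_real,
      Real.norm_of_nonneg hs.le, div_le_iff₀ hs]
    exact hws
  have hu_slit : u ∈ Complex.slitPlane := Complex.ball_one_subset_slitPlane <| by
    rw [mem_ball_iff_norm]
    nlinarith [(norm_nonneg _).trans hB]
  refine ⟨?_, _, hasDerivAt_cpow_one_div_comp_rpow hα hr hw hu_slit,
    Complex.norm_cpow_mul_sub_one_le hu hw' hB' hη⟩
  have hw_ne : w s ≠ 0 := fun h => Complex.slitPlane_ne_zero hu_slit (by simp [u, h])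
  have hv : ‖(1 : ℂ) - 1‖ ≤ η := by simpa using hη0
  rw [cpow_one_div_eq_mul_div_rpow hα hr hw_ne,
    show (r : ℂ) * u ^ (1 / (α : ℂ)) - r = r * (u ^ (1 / (α : ℂ)) * 1 - 1) by ring,
    norm_mul, Complex.norm_real, Real.norm_of_nonneg hr.le, mul_comm]
  exact mul_le_mul_of_nonneg_right (Complex.norm_cpow_mul_sub_one_le hu hv hB hη) hr.le

/-- with `w` as in Statement 13 and `r₁ ∈ (0, 1]`, the straightened
curve `h(r) := w(r^α)^{1/α}` (principal complex power) satisfies, for some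
`r₃ ∈ (0, r₁^{1/α}]` and `K'' ≥ 0`, the bounds `|h(r) − r| ≤ K'' r^{1+αγ}` and
`|h'(r) − 1| ≤ K'' r^{αγ}` on `(0, r₃)`. -/
theorem stmt_14 (α γ r₁ K : ℝ) (hα : α ∈ Ioc (0:ℝ) 2) (hγ : γ ∈ Ioc (0:ℝ) 1)
    (hr₁ : r₁ ∈ Ioc (0:ℝ) 1) (hK : 0 ≤ K) (w w' : ℝ → ℂ)
    (hwc : ContinuousOn w (Icc 0 r₁)) (hw0 : w 0 = 0)
    (hwd : ∀ r ∈ Ioo (0:ℝ) r₁, HasDerivAt w (w' r) r)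
    (hw' : ∀ r ∈ Ioo (0:ℝ) r₁, ‖w' r - 1‖ ≤ K * r ^ γ)
    (h : ℝ → ℂ) (hh : ∀ r : ℝ, h r = w (r ^ α) ^ (1 / (α:ℂ))) :
    ∃ r₃ ∈ Ioc (0:ℝ) (r₁ ^ (1 / α)), ∃ K'' ≥ (0:ℝ), ∀ r ∈ Ioo (0:ℝ) r₃,
      ‖h r - (r : ℂ)‖ ≤ K'' * r ^ (1 + α * γ) ∧
      ∃ d : ℂ, HasDerivAt h d r ∧ ‖d - 1‖ ≤ K'' * r ^ (α * γ) := by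
  set B := ‖1 / (α : ℂ)‖ + ‖1 / (α : ℂ) - 1‖
  have hrpow {β : ℝ} (hβ : 0 < β) : Tendsto (fun r : ℝ => r ^ β) (𝓝[>] 0) (𝓝 0) := by
    simpa [Real.zero_rpow hβ.ne'] using
      (Real.continuousAt_rpow_const 0 β (Or.inr hβ.le)).tendsto.mono_left nhdsWithin_le_nhds
  have hsmall : ∀ᶠ r in 𝓝[>] 0, r ^ α < r₁ ∧ 3 * (B + 1) * (K * r ^ (α * γ)) < 1 := by
    have hη := ((hrpow (mul_pos hα.1 hγ.1)).const_mul K).const_mul (3 * (B + 1))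
    simp only [mul_zero] at hη
    exact ((hrpow hα.1).eventually (gt_mem_nhds hr₁.1)).and
      (hη.eventually (gt_mem_nhds one_pos))
  obtain ⟨r₃, hr₃, hr₃_small⟩ :=
    exists_Ioo_subset_of_eventually_nhdsGT hsmall (Real.rpow_pos_of_pos hr₁.1 _)
  refine ⟨r₃, hr₃, (3 * B + 2) * K, by positivity, fun r hr => ?_⟩
  obtain ⟨hs, hη⟩ := hr₃_small r hr
  have hs' : r ^ α ∈ Ioo 0 r₁ := ⟨Real.rpow_pos_of_pos hr.1 α, hs⟩
  have hsγ : (r ^ α) ^ γ = r ^ (α * γ) := (Real.rpow_mul hr.1.le α γ).symm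
  obtain ⟨hval, d, hd, hd1⟩ :=
    norm_sub_le_and_hasDerivAt_cpow_one_div_comp_rpow hα.1.ne' hr.1 (hwd _ hs')
    (hsγ ▸ norm_sub_ofReal_le_of_norm_deriv_sub_one_le hγ.1.le hK hwc hw0 hwd hw' hs')
    (hsγ ▸ hw' _ hs') (le_add_of_nonneg_right (norm_nonneg _))
    (le_add_of_nonneg_left (norm_nonneg _)) hη.le
  rw [funext hh]
  refine ⟨?_, d, hd, by linarith⟩
  rw [Real.rpow_add hr.1, Real.rpow_one]
  exact hval.trans_eq (by ring)
end
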